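/- arXiv:math/0609583 — 4 statements merged into one kernel-verified Lean document; each statement's English description precedes it below -/
import Mathlib

section
/- Let I be an ideal of R and F = {f_i}_{i∈J} a subset of I. (i) Suppose F generates I and has the property that every nonzero f ∈ I has a presentation f = Σ_j v_j f_j w_j, in which the v_j, w_j are homogeneous elements of R and f_j ∈ F (possibly with repetitions), such that v_j f_j w_j ≠ 0 and d(HT(v_j HT(f_j) w_j)) ≼ d(f) for all j; then ⟨HT(I)⟩ = ⟨HT(F)⟩. (ii) Conversely, if ≺ is a well-order on Γ and ⟨HT(I)⟩ = ⟨HT(F)⟩, then F is a generating set of I having the presentation property stated in (i). -/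
/-!
STATEMENT 1.  Γ a totally ordered semigroup, R a Γ-graded K-algebra, I a
two-sided ideal and F ⊆ I.
(i) If F generates I and every nonzero f ∈ I admits a presentation
    f = Σ_j v_j f_j w_j with v_j, w_j homogeneous, f_j ∈ F, v_j f_j w_j ≠ 0 and
    d(HT(v_j HT(f_j) w_j)) ≼ d(f)  (i.e. d(v_j)·d(HT f_j)·d(w_j) ≼ d(f)),
    then ⟨HT(I)⟩ = ⟨HT(F)⟩.
(ii) If ≺ is a well-order on Γ and ⟨HT(I)⟩ = ⟨HT(F)⟩, then F generates I and
    has the presentation property of (i).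
-/

open Function

universe u v w

variable (K : Type u) [Field K] (Γ : Type v) [Semigroup Γ] [LinearOrder Γ]

/-- The two-sided ideal (as a `K`-subspace, automatically an ideal) of `R`
generated by a subset `S`. -/
def twoSidedSpan (R : Type w) [Ring R] [Algebra K R] (S : Set R) : Submodule K R :=
  sInf {J : Submodule K R | S ⊆ J ∧ ∀ r : R, ∀ x ∈ J, r * x ∈ J ∧ x * r ∈ J}

variable {R : Type w} [Ring R] [Algebra K R]

/-- `ℛ` is a `Γ`-grading of the `K`-algebra `R`. -/
structure IsAlgGrading [DecidableEq Γ] (ℛ : Γ → Submodule K R) : Prop where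
  internal : DirectSum.IsInternal ℛ
  mul_mem : ∀ {γ₁ γ₂ : Γ} {x y : R}, x ∈ ℛ γ₁ → y ∈ ℛ γ₂ → x * y ∈ ℛ (γ₁ * γ₂)

/-- `F*_γR = ⋃_{γ'≺γ} F_{γ'}R` (the sum of all `R_{γ'}` with `γ' ≺ γ`). -/
def gradeFilStar (ℛ : Γ → Submodule K R) (γ : Γ) : Submodule K R := ⨆ γ' < γ, ℛ γ'

/-- `IsHT ℛ f h γ` : `h` is the head term of `f`, of degree `d(f) = γ`. -/
def IsHT (ℛ : Γ → Submodule K R) (f h : R) (γ : Γ) : Prop :=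
  h ∈ ℛ γ ∧ h ≠ 0 ∧ f - h ∈ gradeFilStar K Γ ℛ γ

/-- The set of head terms of elements of `S`. -/
def HTset (ℛ : Γ → Submodule K R) (S : Set R) : Set R :=
  {h | ∃ f ∈ S, ∃ γ, IsHT K Γ ℛ f h γ}

/-- The presentation property of Proposition 2.2: every nonzero `f ∈ I` can be
written as `f = Σ_j v_j f_j w_j` with `v_j ∈ R_{α_j}`, `w_j ∈ R_{β_j}`
homogeneous, `f_j ∈ F` (possibly repeated), `v_j f_j w_j ≠ 0`, and
`d(HT(v_j HT(f_j) w_j)) = α_j · d(HT(f_j)) · β_j ≼ d(f)` for all `j`. -/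
def HasHTPresentations (ℛ : Γ → Submodule K R) (I : Submodule K R) (F : Set R) : Prop :=
  ∀ f ∈ I, f ≠ 0 → ∀ γf : Γ, (∃ hf, IsHT K Γ ℛ f hf γf) →
    ∃ (n : ℕ) (v w g : Fin n → R) (α β δ : Fin n → Γ),
      f = ∑ j, v j * g j * w j ∧
      ∀ j : Fin n,
        g j ∈ F ∧ v j * g j * w j ≠ 0 ∧
        v j ∈ ℛ (α j) ∧ w j ∈ ℛ (β j) ∧
        (∃ h, IsHT K Γ ℛ (g j) h (δ j)) ∧
        α j * δ j * β j ≤ γf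

section Aux
set_option linter.unusedSectionVars false

variable {K Γ}
variable [DecidableEq Γ] {ℛ : Γ → Submodule K R}

/-- The decomposition equivalence coming from an internal grading. -/
noncomputable def gradeEquiv (hgr : IsAlgGrading K Γ ℛ) : (DirectSum Γ fun γ => ℛ γ) ≃ₗ[K] R :=
  LinearEquiv.ofBijective (DirectSum.coeLinearMap ℛ) hgr.internal

/-- The `γ`-homogeneous component of `x`. -/
noncomputable def hcomp (hgr : IsAlgGrading K Γ ℛ) (x : R) (γ : Γ) : R :=
  (((gradeEquiv hgr).symm x) γ : R)

lemma hcomp_mem (hgr : IsAlgGrading K Γ ℛ) (x : R) (γ : Γ) : hcomp hgr x γ ∈ ℛ γ :=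
  SetLike.coe_mem _

lemma hcomp_self (hgr : IsAlgGrading K Γ ℛ) {x : R} {γ : Γ} (hx : x ∈ ℛ γ) :
    hcomp hgr x γ = x := by
  rw [hcomp, gradeEquiv, hgr.internal.ofBijective_coeLinearMap_of_mem hx]

lemma hcomp_ne (hgr : IsAlgGrading K Γ ℛ) {x : R} {γ γ' : Γ} (hx : x ∈ ℛ γ) (h : γ' ≠ γ) :
    hcomp hgr x γ' = 0 := by
  rw [hcomp, gradeEquiv, hgr.internal.ofBijective_coeLinearMap_of_mem_ne (Ne.symm h) hx,
    ZeroMemClass.coe_zero]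

lemma hcomp_zero (hgr : IsAlgGrading K Γ ℛ) (γ : Γ) : hcomp hgr (0 : R) γ = 0 := by
  simp [hcomp]

lemma hcomp_add (hgr : IsAlgGrading K Γ ℛ) (x y : R) (γ : Γ) :
    hcomp hgr (x + y) γ = hcomp hgr x γ + hcomp hgr y γ := by
  simp [hcomp, map_add]

lemma hcomp_sub (hgr : IsAlgGrading K Γ ℛ) (x y : R) (γ : Γ) :
    hcomp hgr (x - y) γ = hcomp hgr x γ - hcomp hgr y γ := by
  simp [hcomp, map_sub]

open scoped Classical in
/-- The support of `x`: the degrees of its nonzero homogeneous components. -/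
noncomputable def hsupp (hgr : IsAlgGrading K Γ ℛ) (x : R) : Finset Γ :=
  DFinsupp.support ((gradeEquiv hgr).symm x)

lemma mem_hsupp_iff (hgr : IsAlgGrading K Γ ℛ) {x : R} {γ : Γ} :
    γ ∈ hsupp hgr x ↔ hcomp hgr x γ ≠ 0 := by
  classical
  rw [hsupp, DFinsupp.mem_support_iff, hcomp]
  simp [Submodule.coe_eq_zero]

lemma sum_hcomp (hgr : IsAlgGrading K Γ ℛ) (x : R) :
    ∑ γ ∈ hsupp hgr x, hcomp hgr x γ = x := by
  classical
  have h1 : ((gradeEquiv hgr).symm x) =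
      ∑ γ ∈ DFinsupp.support ((gradeEquiv hgr).symm x),
        DirectSum.of (fun γ => ℛ γ) γ (((gradeEquiv hgr).symm x) γ) :=
    (DirectSum.sum_support_of _).symm
  have h2 : x = gradeEquiv hgr ((gradeEquiv hgr).symm x) :=
    ((gradeEquiv hgr).apply_symm_apply x).symm
  symm
  calc x = gradeEquiv hgr ((gradeEquiv hgr).symm x) := h2
    _ = ∑ γ ∈ DFinsupp.support ((gradeEquiv hgr).symm x),
        gradeEquiv hgr (DirectSum.of (fun γ => ℛ γ) γ (((gradeEquiv hgr).symm x) γ)) := by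
        rw [← map_sum, ← h1]
    _ = ∑ γ ∈ hsupp hgr x, hcomp hgr x γ := by
        rw [hsupp]
        refine Finset.sum_congr rfl fun γ _ => ?_
        rw [hcomp]; exact DirectSum.coeLinearMap_of ℛ γ _
lemma mem_biSup_iff (hgr : IsAlgGrading K Γ ℛ) (s : Set Γ) (x : R) :
    x ∈ (⨆ γ ∈ s, ℛ γ) ↔ ∀ γ, hcomp hgr x γ ≠ 0 → γ ∈ s := by
  constructor
  · intro hx
    rw [iSup_subtype'] at hx
    refine Submodule.iSup_induction (motive := fun y => ∀ γ, hcomp hgr y γ ≠ 0 → γ ∈ s)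
      (fun (i : {γ // γ ∈ s}) => ℛ i.1) hx ?_ ?_ ?_
    · rintro ⟨γ₀, hγ₀⟩ y hy γ hne
      by_cases h : γ = γ₀
      · exact h ▸ hγ₀
      · exact absurd (hcomp_ne hgr hy h) hne
    · intro γ hne
      exact absurd (hcomp_zero hgr γ) hne
    · intro y z hy hz γ hne
      rw [hcomp_add] at hne
      by_cases h : hcomp hgr y γ = 0
      · exact hz γ (by rwa [h, zero_add] at hne)
      · exact hy γ h
  · intro h
    rw [← sum_hcomp hgr x]
    refine Submodule.sum_mem _ fun γ hγ => ?_
    exact Submodule.mem_iSup_of_mem γ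
      (Submodule.mem_iSup_of_mem (h γ ((mem_hsupp_iff hgr).1 hγ)) (hcomp_mem hgr x γ))

lemma mem_fil_iff (hgr : IsAlgGrading K Γ ℛ) {γ : Γ} {x : R} :
    x ∈ gradeFilStar K Γ ℛ γ ↔ ∀ γ', hcomp hgr x γ' ≠ 0 → γ' < γ :=
  mem_biSup_iff hgr {γ' | γ' < γ} x

lemma eq_zero_of_mem_of_mem_biSup (hgr : IsAlgGrading K Γ ℛ) {γ : Γ} {s : Set Γ} {x : R}
    (hx : x ∈ ℛ γ) (hs : x ∈ ⨆ γ' ∈ s, ℛ γ') (hγ : γ ∉ s) : x = 0 := by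
  by_contra h
  exact hγ ((mem_biSup_iff hgr s x).1 hs γ (by rwa [hcomp_self hgr hx]))

lemma eq_zero_of_mem_of_mem_fil (hgr : IsAlgGrading K Γ ℛ) {γ : Γ} {x : R}
    (hx : x ∈ ℛ γ) (hx' : x ∈ gradeFilStar K Γ ℛ γ) : x = 0 :=
  eq_zero_of_mem_of_mem_biSup hgr hx hx' (lt_irrefl γ)

lemma hsupp_nonempty (hgr : IsAlgGrading K Γ ℛ) {x : R} (hne : x ≠ 0) :
    (hsupp hgr x).Nonempty := by
  rcases Finset.eq_empty_or_nonempty (hsupp hgr x) with h | h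
  · exact absurd ((sum_hcomp hgr x).symm.trans (by rw [h, Finset.sum_empty])) hne
  · exact h

lemma exists_isHT_max (hgr : IsAlgGrading K Γ ℛ) {x : R} (hne : x ≠ 0) :
    ∃ γ, γ ∈ hsupp hgr x ∧ (∀ γ'' ∈ hsupp hgr x, γ'' ≤ γ) ∧
      IsHT K Γ ℛ x (hcomp hgr x γ) γ := by
  obtain h := hsupp_nonempty hgr hne
  refine ⟨(hsupp hgr x).max' h, (hsupp hgr x).max'_mem h, fun γ'' h'' => Finset.le_max' _ _ h'',
    hcomp_mem hgr x _, (mem_hsupp_iff hgr).1 ((hsupp hgr x).max'_mem h), ?_⟩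
  rw [mem_fil_iff hgr]
  intro γ' h'
  rw [hcomp_sub] at h'
  by_cases hc : γ' = (hsupp hgr x).max' h
  · rw [hc, hcomp_self hgr (hcomp_mem hgr x _), sub_self] at h'
    exact absurd rfl h'
  · rw [hcomp_ne hgr (hcomp_mem hgr x _) hc, sub_zero] at h'
    exact lt_of_le_of_ne (Finset.le_max' _ _ ((mem_hsupp_iff hgr).2 h')) hc

lemma exists_isHT (hgr : IsAlgGrading K Γ ℛ) {x : R} (hne : x ≠ 0) :
    ∃ h γ, IsHT K Γ ℛ x h γ := by
  obtain ⟨γ, _, _, hHT⟩ := exists_isHT_max hgr hne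
  exact ⟨_, γ, hHT⟩

lemma exists_isHT_of_mem_fil (hgr : IsAlgGrading K Γ ℛ) {γ : Γ} {x : R}
    (hx : x ∈ gradeFilStar K Γ ℛ γ) (hne : x ≠ 0) :
    ∃ h γ', γ' < γ ∧ IsHT K Γ ℛ x h γ' := by
  obtain ⟨γ', hmem, _, hHT⟩ := exists_isHT_max hgr hne
  exact ⟨_, γ', (mem_fil_iff hgr).1 hx γ' ((mem_hsupp_iff hgr).1 hmem), hHT⟩

lemma mem_fil_of_lt {γ γ' : Γ} {x : R} (h : γ' < γ) (hx : x ∈ ℛ γ') :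
    x ∈ gradeFilStar K Γ ℛ γ :=
  Submodule.mem_iSup_of_mem γ' (Submodule.mem_iSup_of_mem h hx)

lemma fil_mono {γ γ' : Γ} (h : γ ≤ γ') :
    gradeFilStar K Γ ℛ γ ≤ gradeFilStar K Γ ℛ γ' :=
  biSup_mono fun _ h' => lt_of_lt_of_le h' h

lemma mul_mem3 (hgr : IsAlgGrading K Γ ℛ) {α δ β : Γ} {v t w : R}
    (hv : v ∈ ℛ α) (ht : t ∈ ℛ δ) (hw : w ∈ ℛ β) : v * t * w ∈ ℛ (α * δ * β) :=
  hgr.mul_mem (hgr.mul_mem hv ht) hw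

lemma mul_fil_mem [CovariantClass Γ Γ (· * ·) (· < ·)]
    [CovariantClass Γ Γ (Function.swap (· * ·)) (· < ·)]
    (hgr : IsAlgGrading K Γ ℛ) {α δ β : Γ} {v t w : R}
    (hv : v ∈ ℛ α) (hw : w ∈ ℛ β) (ht : t ∈ gradeFilStar K Γ ℛ δ) :
    v * t * w ∈ gradeFilStar K Γ ℛ (α * δ * β) := by
  rw [gradeFilStar, iSup_subtype'] at ht
  refine Submodule.iSup_induction (motive := fun t => v * t * w ∈ gradeFilStar K Γ ℛ (α * δ * β))
    (fun (i : {γ' // γ' < δ}) => ℛ i.1) ht ?_ ?_ ?_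
  · rintro ⟨γ', hγ'⟩ t ht
    exact mem_fil_of_lt (mul_lt_mul_left (mul_lt_mul_right hγ' α) β) (mul_mem3 hgr hv ht hw)
  · show v * 0 * w ∈ _
    rw [mul_zero, zero_mul]; exact Submodule.zero_mem _
  · intro y z hy hz
    show v * (y + z) * w ∈ _
    rw [mul_add, add_mul]; exact Submodule.add_mem _ hy hz
lemma subset_twoSidedSpan (S : Set R) : S ⊆ twoSidedSpan K R S := fun x hx =>
  Submodule.mem_sInf.2 fun _ hJ => hJ.1 hx

lemma twoSidedSpan_le {S : Set R} {J : Submodule K R} (h1 : S ⊆ J)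
    (h2 : ∀ r : R, ∀ x ∈ J, r * x ∈ J ∧ x * r ∈ J) : twoSidedSpan K R S ≤ J :=
  sInf_le ⟨h1, h2⟩

lemma twoSidedSpan_closed (S : Set R) :
    ∀ r : R, ∀ x ∈ twoSidedSpan K R S, r * x ∈ twoSidedSpan K R S ∧ x * r ∈ twoSidedSpan K R S := by
  intro r x hx
  constructor <;> refine Submodule.mem_sInf.2 fun J hJ => ?_
  · exact (hJ.2 r x (Submodule.mem_sInf.1 hx J hJ)).1
  · exact (hJ.2 r x (Submodule.mem_sInf.1 hx J hJ)).2

lemma twoSidedSpan_mono {S T : Set R} (h : S ⊆ T) : twoSidedSpan K R S ≤ twoSidedSpan K R T :=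
  twoSidedSpan_le (h.trans (subset_twoSidedSpan T)) (twoSidedSpan_closed T)

/-- Homogeneous sandwiches `v * s * w` of elements of `S`. -/
def sandwiches (ℛ : Γ → Submodule K R) (S : Set R) : Set R :=
  {x | ∃ v s w γ₁ γ₂, s ∈ S ∧ v ∈ ℛ γ₁ ∧ w ∈ ℛ γ₂ ∧ x = v * s * w}

lemma sandwich_mem_twoSidedSpan {S : Set R} {v s w : R} (hs : s ∈ S) :
    v * s * w ∈ twoSidedSpan K R S :=
  (twoSidedSpan_closed S w _ ((twoSidedSpan_closed S v s (subset_twoSidedSpan S hs)).1)).2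

lemma twoSidedSpan_le_span_sandwiches (hgr : IsAlgGrading K Γ ℛ) (S : Set R) :
    twoSidedSpan K R S ≤ Submodule.span K (sandwiches ℛ S) := by
  have hmul : ∀ r : R, ∀ x ∈ Submodule.span K (sandwiches ℛ S),
      r * x ∈ Submodule.span K (sandwiches ℛ S) ∧
      x * r ∈ Submodule.span K (sandwiches ℛ S) := by
    intro r x hx
    refine Submodule.span_induction (p := fun x _ => ∀ r : R,
      r * x ∈ Submodule.span K (sandwiches ℛ S) ∧
      x * r ∈ Submodule.span K (sandwiches ℛ S)) ?_ ?_ ?_ ?_ hx r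
    · rintro x ⟨v, s, w, γ₁, γ₂, hs, hv, hw, rfl⟩ r
      constructor
      · have : r * (v * s * w) = ∑ γ ∈ hsupp hgr r, hcomp hgr r γ * v * s * w := by
          conv_lhs => rw [← sum_hcomp hgr r]
          rw [Finset.sum_mul]
          exact Finset.sum_congr rfl fun γ _ => by rw [← mul_assoc, ← mul_assoc]
        rw [this]
        refine Submodule.sum_mem _ fun γ _ => Submodule.subset_span
          ⟨hcomp hgr r γ * v, s, w, γ * γ₁, γ₂, hs, hgr.mul_mem (hcomp_mem hgr r γ) hv, hw, rfl⟩
      · have : v * s * w * r = ∑ γ ∈ hsupp hgr r, v * s * (w * hcomp hgr r γ) := by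
          conv_lhs => rw [← sum_hcomp hgr r]
          rw [Finset.mul_sum]
          exact Finset.sum_congr rfl fun γ _ => by rw [mul_assoc]
        rw [this]
        refine Submodule.sum_mem _ fun γ _ => Submodule.subset_span
          ⟨v, s, w * hcomp hgr r γ, γ₁, γ₂ * γ, hs, hv, hgr.mul_mem hw (hcomp_mem hgr r γ), rfl⟩
    · intro r
      rw [mul_zero, zero_mul]
      exact ⟨Submodule.zero_mem _, Submodule.zero_mem _⟩
    · intro x y _ _ hx hy r
      rw [mul_add, add_mul]
      exact ⟨Submodule.add_mem _ (hx r).1 (hy r).1, Submodule.add_mem _ (hx r).2 (hy r).2⟩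
    · intro a x _ hx r
      rw [mul_smul_comm, smul_mul_assoc]
      exact ⟨Submodule.smul_mem _ a (hx r).1, Submodule.smul_mem _ a (hx r).2⟩
  refine twoSidedSpan_le ?_ hmul
  intro s hs
  have : s = ∑ γ ∈ hsupp hgr 1, ∑ γ' ∈ hsupp hgr 1,
      hcomp hgr (1 : R) γ * s * hcomp hgr (1 : R) γ' := by
    calc s = (∑ γ ∈ hsupp hgr (1 : R), hcomp hgr (1 : R) γ) * s *
          (∑ γ' ∈ hsupp hgr (1 : R), hcomp hgr (1 : R) γ') := by
          rw [sum_hcomp hgr 1, one_mul, mul_one]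
      _ = ∑ γ ∈ hsupp hgr (1 : R), ∑ γ' ∈ hsupp hgr (1 : R),
          hcomp hgr (1 : R) γ * s * hcomp hgr (1 : R) γ' := by
          simp only [Finset.sum_mul, Finset.mul_sum]
          rw [Finset.sum_comm]
  rw [this]
  exact Submodule.sum_mem _ fun γ _ => Submodule.sum_mem _ fun γ' _ => Submodule.subset_span
    ⟨hcomp hgr 1 γ, s, hcomp hgr 1 γ', γ, γ', hs, hcomp_mem hgr 1 γ, hcomp_mem hgr 1 γ', rfl⟩
/-- A presentation of `f` by elements of `F` with head degrees bounded by `γf`. -/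
def PresBdd (ℛ : Γ → Submodule K R) (F : Set R) (γf : Γ) (f : R) : Prop :=
  ∃ (n : ℕ) (v w g : Fin n → R) (α β δ : Fin n → Γ),
    f = ∑ j, v j * g j * w j ∧
    ∀ j : Fin n,
      g j ∈ F ∧ v j * g j * w j ≠ 0 ∧
      v j ∈ ℛ (α j) ∧ w j ∈ ℛ (β j) ∧
      (∃ h, IsHT K Γ ℛ (g j) h (δ j)) ∧
      α j * δ j * β j ≤ γf

lemma PresBdd.mono {F : Set R} {γ γ' : Γ} {f : R} (h : γ ≤ γ')
    (hp : PresBdd ℛ F γ f) : PresBdd ℛ F γ' f := by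
  obtain ⟨n, v, w, g, α, β, δ, hsum, hc⟩ := hp
  exact ⟨n, v, w, g, α, β, δ, hsum, fun j => ⟨(hc j).1, (hc j).2.1, (hc j).2.2.1, (hc j).2.2.2.1,
    (hc j).2.2.2.2.1, le_trans (hc j).2.2.2.2.2 h⟩⟩

lemma PresBdd.add {F : Set R} {γ : Γ} {f f' : R}
    (hp : PresBdd ℛ F γ f) (hp' : PresBdd ℛ F γ f') : PresBdd ℛ F γ (f + f') := by
  obtain ⟨n, v, w, g, α, β, δ, rfl, hc⟩ := hp
  obtain ⟨m, v', w', g', α', β', δ', rfl, hc'⟩ := hp'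
  refine ⟨n + m, Fin.append v v', Fin.append w w', Fin.append g g', Fin.append α α',
    Fin.append β β', Fin.append δ δ', ?_, ?_⟩
  · rw [Fin.sum_univ_add]
    simp only [Fin.append_left, Fin.append_right]
  · intro j
    refine Fin.addCases (fun j => ?_) (fun j => ?_) j
    · simpa only [Fin.append_left] using hc j
    · simpa only [Fin.append_right] using hc' j

lemma presBdd_of_finset {ι : Type*} {F : Set R} {γf : Γ} {f : R} (s : Finset ι)
    (v w g : ι → R) (α β δ : ι → Γ)
    (hf : f = ∑ j ∈ s, v j * g j * w j)
    (hc : ∀ j ∈ s, g j ∈ F ∧ v j * g j * w j ≠ 0 ∧ v j ∈ ℛ (α j) ∧ w j ∈ ℛ (β j) ∧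
      (∃ h, IsHT K Γ ℛ (g j) h (δ j)) ∧ α j * δ j * β j ≤ γf) :
    PresBdd ℛ F γf f := by
  classical
  set e := s.equivFin
  refine ⟨s.card, fun i => v (e.symm i), fun i => w (e.symm i), fun i => g (e.symm i),
    fun i => α (e.symm i), fun i => β (e.symm i), fun i => δ (e.symm i), ?_, ?_⟩
  · rw [hf, ← Finset.sum_coe_sort s (fun j => v j * g j * w j)]
    exact (Equiv.sum_comp e.symm (fun j : s => v (j : ι) * g (j : ι) * w (j : ι))).symm
  · intro i
    exact hc (e.symm i) (e.symm i).2
lemma isHT_ne_zero (hgr : IsAlgGrading K Γ ℛ) {f h : R} {γ : Γ}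
    (hh : IsHT K Γ ℛ f h γ) : f ≠ 0 := by
  rintro rfl
  have : h ∈ gradeFilStar K Γ ℛ γ := by
    have := hh.2.2
    rw [zero_sub] at this
    simpa using Submodule.neg_mem _ this
  exact hh.2.1 (eq_zero_of_mem_of_mem_fil hgr hh.1 this)

lemma part_i [CovariantClass Γ Γ (· * ·) (· < ·)]
    [CovariantClass Γ Γ (Function.swap (· * ·)) (· < ·)]
    (hgr : IsAlgGrading K Γ ℛ) (I : Submodule K R) (F : Set R) (hFI : F ⊆ (I : Set R))
    (hpres : HasHTPresentations K Γ ℛ I F) :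
    twoSidedSpan K R (HTset K Γ ℛ I) = twoSidedSpan K R (HTset K Γ ℛ F) := by
  classical
  apply le_antisymm
  · refine twoSidedSpan_le ?_ (twoSidedSpan_closed _)
    rintro h ⟨f, hfI, γ, hh⟩
    have hf0 : f ≠ 0 := isHT_ne_zero hgr hh
    obtain ⟨n, v, w, g, α, β, δ, hsum, hcond⟩ := hpres f hfI hf0 γ ⟨h, hh⟩
    choose ht hht using fun j => (hcond j).2.2.2.2.1
    set S : Finset (Fin n) := Finset.univ.filter (fun j => α j * δ j * β j = γ) with hS
    have hdeg : ∀ j ∈ S, v j * ht j * w j ∈ ℛ γ := by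
      intro j hj
      have := mul_mem3 hgr (hcond j).2.2.1 (hht j).1 (hcond j).2.2.2.1
      rwa [(Finset.mem_filter.1 hj).2] at this
    have key : h = ∑ j ∈ S, v j * ht j * w j := by
      have hmem : h - ∑ j ∈ S, v j * ht j * w j ∈ ℛ γ :=
        Submodule.sub_mem _ hh.1 (Submodule.sum_mem _ hdeg)
      have hfil : h - ∑ j ∈ S, v j * ht j * w j ∈ gradeFilStar K Γ ℛ γ := by
        have e1 : h - ∑ j ∈ S, v j * ht j * w j =
            -(f - h) + (f - ∑ j ∈ S, v j * ht j * w j) := by abel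
        rw [e1]
        refine Submodule.add_mem _ (Submodule.neg_mem _ hh.2.2) ?_
        have e2 : f - ∑ j ∈ S, v j * ht j * w j =
            (∑ j ∈ S, (v j * g j * w j - v j * ht j * w j)) +
            ∑ j ∈ Finset.univ.filter (fun j => ¬ (α j * δ j * β j = γ)), v j * g j * w j := by
          rw [hsum, ← Finset.sum_filter_add_sum_filter_not Finset.univ
            (fun j => α j * δ j * β j = γ) (fun j => v j * g j * w j), ← hS,
            Finset.sum_sub_distrib]
          abel
        rw [e2]
        refine Submodule.add_mem _ (Submodule.sum_mem _ fun j hj => ?_)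
          (Submodule.sum_mem _ fun j hj => ?_)
        · have e3 : v j * g j * w j - v j * ht j * w j = v j * (g j - ht j) * w j := by
            rw [mul_sub, sub_mul]
          rw [e3]
          have := mul_fil_mem hgr (hcond j).2.2.1 (hcond j).2.2.2.1 (hht j).2.2
          rwa [(Finset.mem_filter.1 hj).2] at this
        · have hne : α j * δ j * β j ≠ γ := (Finset.mem_filter.1 hj).2
          have hlt : α j * δ j * β j < γ := lt_of_le_of_ne (hcond j).2.2.2.2.2 hne
          have e4 : v j * g j * w j = v j * ht j * w j + v j * (g j - ht j) * w j := by
            rw [mul_sub, sub_mul]; abel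
          rw [e4]
          refine Submodule.add_mem _
            (mem_fil_of_lt hlt (mul_mem3 hgr (hcond j).2.2.1 (hht j).1 (hcond j).2.2.2.1)) ?_
          exact fil_mono hlt.le (mul_fil_mem hgr (hcond j).2.2.1 (hcond j).2.2.2.1 (hht j).2.2)
      have := eq_zero_of_mem_of_mem_fil hgr hmem hfil
      exact sub_eq_zero.1 this
    rw [key]
    exact Submodule.sum_mem _ fun j hj =>
      sandwich_mem_twoSidedSpan ⟨g j, (hcond j).1, δ j, hht j⟩
  · exact twoSidedSpan_mono fun h ⟨f, hf, γ, hh⟩ => ⟨f, hFI hf, γ, hh⟩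
lemma part_ii_key [CovariantClass Γ Γ (· * ·) (· < ·)]
    [CovariantClass Γ Γ (Function.swap (· * ·)) (· < ·)]
    (hgr : IsAlgGrading K Γ ℛ) (I : Submodule K R)
    (hI : ∀ r : R, ∀ x ∈ I, r * x ∈ I ∧ x * r ∈ I)
    (F : Set R) (hFI : F ⊆ (I : Set R)) (wf : WellFoundedLT Γ)
    (heq : twoSidedSpan K R (HTset K Γ ℛ I) = twoSidedSpan K R (HTset K Γ ℛ F)) :
    ∀ γf : Γ, ∀ f ∈ I, f ≠ 0 → (∃ hf, IsHT K Γ ℛ f hf γf) → PresBdd ℛ F γf f := by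
  classical
  intro γf
  induction γf using wf.wf.induction with
  | _ γf IH =>
  rintro f hfI hf0 ⟨hf, hHT⟩
  -- hf is in the span of homogeneous sandwiches of head terms of F
  have h1 : hf ∈ Submodule.span K (sandwiches ℛ (HTset K Γ ℛ F)) := by
    refine twoSidedSpan_le_span_sandwiches hgr _ ?_
    rw [← heq]
    exact subset_twoSidedSpan _ ⟨f, hfI, γf, hHT⟩
  rw [Submodule.mem_span_set'] at h1
  obtain ⟨n, c, u, hu⟩ := h1
  -- unpack each sandwich
  have h2 : ∀ i : Fin n, ∃ (v s w : R) (γ₁ γ₂ : Γ),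
      s ∈ HTset K Γ ℛ F ∧ v ∈ ℛ γ₁ ∧ w ∈ ℛ γ₂ ∧ (u i : R) = v * s * w :=
    fun i => (u i).2
  choose v0 s w α β hsF hv0 hw hu2 using h2
  -- absorb coefficients into the left factor
  set v : Fin n → R := fun i => c i • v0 i with hv'
  have hv : ∀ i, v i ∈ ℛ (α i) := fun i => Submodule.smul_mem _ _ (hv0 i)
  have hhf : hf = ∑ i : Fin n, v i * s i * w i := by
    rw [← hu]
    refine Finset.sum_congr rfl fun i _ => ?_
    rw [hu2 i, hv']
    simp [smul_mul_assoc]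
  -- unpack the head-term data
  have h3 : ∀ i : Fin n, ∃ g, g ∈ F ∧ ∃ δ, IsHT K Γ ℛ g (s i) δ := by
    intro i
    obtain ⟨g, hg, δ, hd⟩ := hsF i
    exact ⟨g, hg, δ, hd⟩
  choose g hg δ hδ using h3
  -- the terms of top degree
  set S : Finset (Fin n) :=
    Finset.univ.filter (fun j => α j * δ j * β j = γf ∧ v j * s j * w j ≠ 0) with hS
  set S' : Finset (Fin n) := Finset.univ.filter (fun j => α j * δ j * β j = γf) with hS'
  have hdegS' : ∀ j ∈ S', v j * s j * w j ∈ ℛ γf := by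
    intro j hj
    have := mul_mem3 hgr (hv j) (hδ j).1 (hw j)
    rwa [(Finset.mem_filter.1 hj).2] at this
  have hSsub : S ⊆ S' := fun j hj => by
    rw [hS', Finset.mem_filter]
    exact ⟨Finset.mem_univ j, (Finset.mem_filter.1 hj).2.1⟩
  have hdegS : ∀ j ∈ S, v j * s j * w j ∈ ℛ γf := fun j hj => hdegS' j (hSsub hj)
  -- hf equals the sum over S
  have key : hf = ∑ j ∈ S, v j * s j * w j := by
    have e0 : ∑ j ∈ S, v j * s j * w j = ∑ j ∈ S', v j * s j * w j := by
      refine Finset.sum_subset hSsub fun j hj hj' => ?_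
      by_contra hne
      exact hj' (by
        rw [hS, Finset.mem_filter]
        exact ⟨Finset.mem_univ j, (Finset.mem_filter.1 hj).2, hne⟩)
    rw [e0]
    have hmem : hf - ∑ j ∈ S', v j * s j * w j ∈ ℛ γf :=
      Submodule.sub_mem _ hHT.1 (Submodule.sum_mem _ hdegS')
    have hrest : hf - ∑ j ∈ S', v j * s j * w j =
        ∑ j ∈ Finset.univ.filter (fun j => ¬ (α j * δ j * β j = γf)), v j * s j * w j := by
      rw [hhf, ← Finset.sum_filter_add_sum_filter_not Finset.univ
        (fun j => α j * δ j * β j = γf) (fun j => v j * s j * w j), ← hS']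
      abel
    have hbs : hf - ∑ j ∈ S', v j * s j * w j ∈ ⨆ γ ∈ {γ : Γ | γ ≠ γf}, ℛ γ := by
      rw [hrest]
      refine Submodule.sum_mem _ fun j hj => Submodule.mem_iSup_of_mem (α j * δ j * β j) ?_
      exact Submodule.mem_iSup_of_mem ((Finset.mem_filter.1 hj).2 : _ ≠ γf)
        (mul_mem3 hgr (hv j) (hδ j).1 (hw j))
    have := eq_zero_of_mem_of_mem_biSup hgr hmem hbs (fun h => h rfl)
    exact (sub_eq_zero.1 this)
  -- the top approximation
  set f₁ : R := ∑ j ∈ S, v j * g j * w j with hf₁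
  have hf₁I : f₁ ∈ I := Submodule.sum_mem _ fun j _ =>
    (hI (w j) _ ((hI (v j) (g j) (hFI (hg j))).1)).2
  have hf₁hf : f₁ - hf ∈ gradeFilStar K Γ ℛ γf := by
    have e1 : f₁ - hf = ∑ j ∈ S, v j * (g j - s j) * w j := by
      rw [hf₁, key, ← Finset.sum_sub_distrib]
      exact Finset.sum_congr rfl fun j _ => by rw [mul_sub, sub_mul]
    rw [e1]
    refine Submodule.sum_mem _ fun j hj => ?_
    have := mul_fil_mem hgr (hv j) (hw j) (hδ j).2.2
    rwa [(Finset.mem_filter.1 (hSsub hj)).2] at this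
  have hfil : f - f₁ ∈ gradeFilStar K Γ ℛ γf := by
    have e2 : f - f₁ = (f - hf) - (f₁ - hf) := by abel
    rw [e2]
    exact Submodule.sub_mem _ hHT.2.2 hf₁hf
  -- f₁ has a bounded presentation
  have pres₁ : PresBdd ℛ F γf f₁ := by
    refine presBdd_of_finset S v w g α β δ hf₁ fun j hj => ?_
    obtain ⟨-, hjS⟩ := Finset.mem_filter.1 hj
    refine ⟨hg j, ?_, hv j, hw j, ⟨s j, hδ j⟩, le_of_eq hjS.1⟩
    intro h0
    refine hjS.2 (eq_zero_of_mem_of_mem_fil hgr (hdegS j hj) ?_)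
    have e3 : v j * s j * w j = -(v j * (g j - s j) * w j) := by
      rw [mul_sub, sub_mul, h0]
      abel
    rw [e3]
    refine Submodule.neg_mem _ ?_
    have := mul_fil_mem hgr (hv j) (hw j) (hδ j).2.2
    rwa [hjS.1] at this
  by_cases hz : f - f₁ = 0
  · rwa [← sub_eq_zero.1 hz] at pres₁
  · obtain ⟨h', γ', hlt, hHT'⟩ := exists_isHT_of_mem_fil hgr hfil hz
    have presf' := IH γ' hlt (f - f₁) (Submodule.sub_mem _ hfI hf₁I) hz ⟨h', hHT'⟩
    have hsumpres := pres₁.add (presf'.mono hlt.le)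
    have e4 : f₁ + (f - f₁) = f := by abel
    rwa [e4] at hsumpres
end Aux

theorem statement1 [DecidableEq Γ]
    [CovariantClass Γ Γ (· * ·) (· < ·)] [CovariantClass Γ Γ (swap (· * ·)) (· < ·)]
    (ℛ : Γ → Submodule K R) (hgr : IsAlgGrading K Γ ℛ)
    -- I a two-sided ideal of R and F ⊆ I
    (I : Submodule K R) (hI : ∀ r : R, ∀ x ∈ I, r * x ∈ I ∧ x * r ∈ I)
    (F : Set R) (hFI : F ⊆ I) :
    -- (i)
    ((twoSidedSpan K R F = I ∧ HasHTPresentations K Γ ℛ I F) →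
      twoSidedSpan K R (HTset K Γ ℛ I) = twoSidedSpan K R (HTset K Γ ℛ F)) ∧
    -- (ii)
    (WellFoundedLT Γ →
      twoSidedSpan K R (HTset K Γ ℛ I) = twoSidedSpan K R (HTset K Γ ℛ F) →
      twoSidedSpan K R F = I ∧ HasHTPresentations K Γ ℛ I F) := by
  constructor
  · rintro ⟨-, hpres⟩
    exact part_i hgr I F hFI hpres
  · intro wf heq
    have key := part_ii_key hgr I hI F hFI wf heq
    have gen : twoSidedSpan K R F = I := by
      refine le_antisymm (twoSidedSpan_le hFI hI) ?_
      intro f hfI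
      by_cases hf0 : f = 0
      · rw [hf0]; exact Submodule.zero_mem _
      · obtain ⟨hf, γf, hHT⟩ := exists_isHT hgr hf0
        obtain ⟨n, v, w, g, α, β, δ, hsum, hc⟩ := key γf f hfI hf0 ⟨hf, hHT⟩
        rw [hsum]
        exact Submodule.sum_mem _ fun j _ => sandwich_mem_twoSidedSpan ((hc j).1)
    exact ⟨gen, fun f hfI hf0 γf hex => key γf f hfI hf0 hex⟩
end

section
/- Let A be a Γ-filtered K-algebra and M an A-module. (i) If FM = {F_γM} is a Γ-filtration of M and G(M) = Σ_{i∈J} G(A)·σ(ξ_i) for elements ξ_i ∈ M with d(ξ_i) = γ_i, then M = Σ_{i∈J} A·ξ_i and F_γM = Σ_{i∈J} (Σ_{s≼γ, s_iγ_i=s} F_{s_i}A)·ξ_i for every γ ∈ Γ; in particular, if G(M) is a finitely generated G(A)-module then M is a finitely generated A-module. (ii) Conversely, if M = Σ_{i=1}^n A·ξ_i where {ξ_1,…,ξ_n} is a minimal set of generators of M, then for any choice of γ_1,…,γ_n ∈ Γ the family F_γM = Σ_{i=1}^n (Σ_{s≼γ, s_iγ_i=s} F_{s_i}A)·ξ_i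 is a Γ-filtration of M for which G(M) = Σ_{i=1}^n G(A)·σ(ξ_i); in particular G(M) is a finitely generated G(A)-module. -/
/-!
Common setting for the lifting results: K a field; Γ an ordered monoid whose
order ≺ is a well-order, compatible with multiplication on both sides, and
whose identity element is the smallest element (the latter is the hypothesis
`(hone : ∀ γ : Γ, 1 ≤ γ)` in the theorem below).
`AlgFiltration K Γ A` is a Γ-filtration FA of the K-algebra A;
`AssocGraded FA B` axiomatises "B is the associated Γ-graded K-algebra G(A)":
it records the Γ-grading of B and, for each γ, the canonical K-linear map
σ γ : F_γA → G(A) onto the component G(A)_γ = F_γA/F*_γA (surjective onto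
`grade γ`, with kernel F*_γA), multiplicative and unital.  These data
determine B up to a canonical isomorphism of Γ-graded K-algebras, so the
structure is a faithful rendering of G(A).  Similarly `ModFiltration` and
`AssocGradedMod` render Γ-filtered A-modules and their associated Γ-graded
G(A)-modules.
-/

open Function

universe u v w x y

variable (K : Type u) [Field K] (Γ : Type v) [Monoid Γ] [LinearOrder Γ]

/-- A Γ-filtration of the K-algebra `A`. -/
structure AlgFiltration (A : Type w) [Ring A] [Algebra K A] where
  F : Γ → Submodule K A
  mono : Monotone F
  exhaustive : ∀ a : A, ∃ γ, a ∈ F γ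
  mul_mem : ∀ {γ₁ γ₂ : Γ} {a b : A}, a ∈ F γ₁ → b ∈ F γ₂ → a * b ∈ F (γ₁ * γ₂)
  one_mem : (1 : A) ∈ F 1

/-- `F*_γA = ⋃_{γ'≺γ} F_{γ'}A`. -/
def AlgFiltration.Fstar {K : Type u} [Field K] {Γ : Type v} [Monoid Γ] [LinearOrder Γ]
    {A : Type w} [Ring A] [Algebra K A]
    (FA : AlgFiltration K Γ A) (γ : Γ) : Submodule K A := ⨆ γ' < γ, FA.F γ'

/-- Axiomatisation of "`B` is the associated Γ-graded K-algebra `G(A)` of the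
Γ-filtered K-algebra `A`". -/
structure AssocGraded [DecidableEq Γ] {A : Type w} [Ring A] [Algebra K A]
    (FA : AlgFiltration K Γ A) (B : Type x) [Ring B] [Algebra K B] where
  grade : Γ → Submodule K B
  internal : DirectSum.IsInternal grade
  σ : ∀ γ : Γ, (FA.F γ) →ₗ[K] B
  σ_mem : ∀ (γ : Γ) (a : FA.F γ), σ γ a ∈ grade γ
  σ_surj : ∀ γ : Γ, ∀ b ∈ grade γ, ∃ a : FA.F γ, σ γ a = b
  σ_ker : ∀ (γ : Γ) (a : FA.F γ), σ γ a = 0 ↔ (a : A) ∈ FA.Fstar γ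
  σ_mul : ∀ {γ₁ γ₂ : Γ} (a : FA.F γ₁) (b : FA.F γ₂),
    σ γ₁ a * σ γ₂ b = σ (γ₁ * γ₂) ⟨(a : A) * (b : A), FA.mul_mem a.2 b.2⟩
  σ_one : σ 1 ⟨1, FA.one_mem⟩ = 1

/-- A Γ-filtration of the A-module `M`, compatible with the Γ-filtration `FA`. -/
structure ModFiltration {A : Type w} [Ring A] [Algebra K A] (FA : AlgFiltration K Γ A)
    (M : Type x) [AddCommGroup M] [Module K M] [Module A M] [IsScalarTower K A M] where
  F : Γ → Submodule K M
  mono : Monotone F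
  exhaustive : ∀ m : M, ∃ γ, m ∈ F γ
  smul_mem : ∀ {γ₁ γ₂ : Γ} {a : A} {m : M}, a ∈ FA.F γ₁ → m ∈ F γ₂ → a • m ∈ F (γ₁ * γ₂)

/-- `F*_γM = ⋃_{γ'≺γ} F_{γ'}M`. -/
def ModFiltration.Fstar {K : Type u} [Field K] {Γ : Type v} [Monoid Γ] [LinearOrder Γ]
    {A : Type w} [Ring A] [Algebra K A] {FA : AlgFiltration K Γ A}
    {M : Type x} [AddCommGroup M] [Module K M] [Module A M] [IsScalarTower K A M]
    (FM : ModFiltration K Γ FA M) (γ : Γ) : Submodule K M := ⨆ γ' < γ, FM.F γ'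

/-- Axiomatisation of "`N` is the associated Γ-graded `G(A)`-module `G(M)` of
the Γ-filtered A-module `M`", where `B = G(A)` via `GA`. -/
structure AssocGradedMod [DecidableEq Γ] {A : Type w} [Ring A] [Algebra K A]
    {FA : AlgFiltration K Γ A} {B : Type x} [Ring B] [Algebra K B]
    (GA : AssocGraded K Γ FA B)
    {M : Type y} [AddCommGroup M] [Module K M] [Module A M] [IsScalarTower K A M]
    (FM : ModFiltration K Γ FA M)
    (N : Type*) [AddCommGroup N] [Module K N] [Module B N] [IsScalarTower K B N] where
  grade : Γ → Submodule K N
  internal : DirectSum.IsInternal grade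
  σ : ∀ γ : Γ, (FM.F γ) →ₗ[K] N
  σ_mem : ∀ (γ : Γ) (m : FM.F γ), σ γ m ∈ grade γ
  σ_surj : ∀ γ : Γ, ∀ y ∈ grade γ, ∃ m : FM.F γ, σ γ m = y
  σ_ker : ∀ (γ : Γ) (m : FM.F γ), σ γ m = 0 ↔ (m : M) ∈ FM.Fstar γ
  σ_smul : ∀ {γ₁ γ₂ : Γ} (a : FA.F γ₁) (m : FM.F γ₂),
    GA.σ γ₁ a • σ γ₂ m = σ (γ₁ * γ₂) ⟨(a : A) • (m : M), FM.smul_mem a.2 m.2⟩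

universe z

/-- The K-subspace `S • m = {a • m | a ∈ S}` of `M` (Submodule-span rendering). -/
def smulSet {K : Type u} [Field K] {A : Type w} [Ring A] [Algebra K A]
    {M : Type y} [AddCommGroup M] [Module K M] [Module A M] [IsScalarTower K A M]
    (S : Submodule K A) (m : M) : Submodule K M :=
  Submodule.span K {x | ∃ a ∈ S, x = a • m}

/-- The filtration `F_γ = Σ_{i∈J} ( Σ_{s≼γ, s_iγ_i=s} F_{s_i}A )·ξ_i`. -/
def genFil {K : Type u} [Field K] {Γ : Type v} [Monoid Γ] [LinearOrder Γ]
    {A : Type w} [Ring A] [Algebra K A] (FA : AlgFiltration K Γ A)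
    {M : Type y} [AddCommGroup M] [Module K M] [Module A M] [IsScalarTower K A M]
    {J : Type z} (ξ : J → M) (γd : J → Γ) (γ : Γ) : Submodule K M :=
  ⨆ (i : J), ⨆ (s : Γ) (_ : s ≤ γ), ⨆ (si : Γ) (_ : si * γd i = s), smulSet (FA.F si) (ξ i)


/-! ### Auxiliary lemmas -/

section Aux

variable {K : Type u} [Field K] {Γ : Type v} [Monoid Γ] [LinearOrder Γ]
variable {A : Type w} [Ring A] [Algebra K A] (FA : AlgFiltration K Γ A)
variable {M : Type y} [AddCommGroup M] [Module K M] [Module A M] [IsScalarTower K A M]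
variable {J : Type*} (ξ : J → M) (γd : J → Γ)

/-- The generating set of `genFil`. -/
def genSet (γ : Γ) : Set M :=
  {x | ∃ i si a, si * γd i ≤ γ ∧ a ∈ FA.F si ∧ x = a • ξ i}

lemma genFil_eq_span (γ : Γ) : genFil FA ξ γd γ = Submodule.span K (genSet FA ξ γd γ) := by
  apply le_antisymm
  · refine iSup_le fun i => iSup_le fun s => iSup_le fun hs => iSup_le fun si =>
      iSup_le fun hsi => ?_
    refine Submodule.span_le.2 fun x hx => ?_
    obtain ⟨a, ha, rfl⟩ := hx
    exact Submodule.subset_span ⟨i, si, a, hsi ▸ hs, ha, rfl⟩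
  · refine Submodule.span_le.2 fun x hx => ?_
    obtain ⟨i, si, a, hle, ha, rfl⟩ := hx
    have h1 : a • ξ i ∈ smulSet (FA.F si) (ξ i) := Submodule.subset_span ⟨a, ha, rfl⟩
    have h2 : smulSet (FA.F si) (ξ i) ≤ genFil FA ξ γd γ := by
      refine le_trans ?_ (le_iSup _ i)
      refine le_trans ?_ (le_iSup _ (si * γd i))
      refine le_trans ?_ (le_iSup _ hle)
      refine le_trans ?_ (le_iSup _ si)
      exact le_iSup (fun _ : si * γd i = si * γd i => smulSet (FA.F si) (ξ i)) rfl
    exact h2 h1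

lemma mem_genFil (i : J) {si γ : Γ} (hle : si * γd i ≤ γ) {a : A} (ha : a ∈ FA.F si) :
    a • ξ i ∈ genFil FA ξ γd γ := by
  rw [genFil_eq_span]; exact Submodule.subset_span ⟨i, si, a, hle, ha, rfl⟩

lemma genFil_mono {γ γ' : Γ} (h : γ ≤ γ') : genFil FA ξ γd γ ≤ genFil FA ξ γd γ' := by
  rw [genFil_eq_span, genFil_eq_span]
  refine Submodule.span_mono fun x hx => ?_
  obtain ⟨i, si, a, hle, ha, rfl⟩ := hx
  exact ⟨i, si, a, hle.trans h, ha, rfl⟩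

lemma genFil_le_span (γ : Γ) :
    genFil FA ξ γd γ ≤ (Submodule.span A (Set.range ξ)).restrictScalars K := by
  rw [genFil_eq_span]
  refine Submodule.span_le.2 fun x hx => ?_
  obtain ⟨i, si, a, _, _, rfl⟩ := hx
  exact Submodule.smul_mem _ a (Submodule.subset_span ⟨i, rfl⟩)

lemma mem_Fstar_iff {FA : AlgFiltration K Γ A} (FM : ModFiltration K Γ FA M) (γ : Γ) (m : M) :
    m ∈ FM.Fstar γ ↔ m = 0 ∨ ∃ γ' < γ, m ∈ FM.F γ' := by
  unfold ModFiltration.Fstar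
  rw [iSup_subtype']
  by_cases h : ∃ γ' : Γ, γ' < γ
  · obtain ⟨γ₀, hγ₀⟩ := h
    have : Nonempty {γ' : Γ // γ' < γ} := ⟨⟨γ₀, hγ₀⟩⟩
    rw [Submodule.mem_iSup_of_directed]
    · constructor
      · rintro ⟨⟨γ', hγ'⟩, hm⟩; exact Or.inr ⟨γ', hγ', hm⟩
      · rintro (rfl | ⟨γ', hγ', hm⟩)
        · exact ⟨⟨γ₀, hγ₀⟩, zero_mem _⟩
        · exact ⟨⟨γ', hγ'⟩, hm⟩
    · rintro ⟨p, hp⟩ ⟨q, hq⟩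
      exact ⟨⟨max p q, max_lt hp hq⟩, FM.mono (le_max_left _ _), FM.mono (le_max_right _ _)⟩
  · have : IsEmpty {γ' : Γ // γ' < γ} := ⟨fun p => h ⟨p.1, p.2⟩⟩
    rw [iSup_of_empty]
    simp only [Submodule.mem_bot]
    constructor
    · exact fun hm => Or.inl hm
    · rintro (rfl | ⟨γ', hγ', _⟩)
      · rfl
      · exact absurd ⟨γ', hγ'⟩ h

lemma mem_Fstar_of_lt {FA : AlgFiltration K Γ A} (FM : ModFiltration K Γ FA M) {γ' γ : Γ}
    (h : γ' < γ) {m : M} (hm : m ∈ FM.F γ') : m ∈ FM.Fstar γ := by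
  rw [mem_Fstar_iff]; exact Or.inr ⟨γ', h, hm⟩

end Aux

section Proj

variable {K : Type u} [Field K] {Γ : Type v} [DecidableEq Γ]

/-- The `K`-linear projection onto the `γ`-homogeneous component of an internal
direct sum decomposition. -/
noncomputable def gradeProj {N : Type*} [AddCommGroup N] [Module K N]
    (grade : Γ → Submodule K N) (hintl : DirectSum.IsInternal grade) (γ : Γ) : N →ₗ[K] N :=
  (grade γ).subtype ∘ₗ (DirectSum.component K Γ (fun s => ↥(grade s)) γ) ∘ₗ
    (LinearEquiv.ofBijective (DirectSum.coeLinearMap grade) hintl).symm.toLinearMap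

lemma gradeProj_of_mem {N : Type*} [AddCommGroup N] [Module K N]
    {grade : Γ → Submodule K N} (hintl : DirectSum.IsInternal grade) {γ δ : Γ} {n : N}
    (hn : n ∈ grade δ) :
    gradeProj grade hintl γ n = if δ = γ then n else 0 := by
  set e := LinearEquiv.ofBijective (DirectSum.coeLinearMap grade) hintl with he
  have h1 : e.symm n = DirectSum.of (fun s => ↥(grade s)) δ ⟨n, hn⟩ := by
    apply e.injective
    rw [e.apply_symm_apply]
    simp [he, LinearEquiv.ofBijective_apply, DirectSum.coeLinearMap_of]
    exact (DirectSum.coeLinearMap_of grade δ ⟨n, hn⟩).symm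
  unfold gradeProj
  simp only [LinearMap.comp_apply, LinearEquiv.coe_coe, ← he, h1]
  rw [← DirectSum.lof_eq_of K]
  rw [DirectSum.component.of]
  by_cases h : δ = γ
  · subst h; simp
  · simp [h]

lemma sum_support_eq {N : Type*} [AddCommGroup N] [Module K N]
    (grade : Γ → Submodule K N) [∀ (i : Γ) (x : ↥(grade i)), Decidable (x ≠ 0)]
    (hintl : DirectSum.IsInternal grade) (n : N) :
    ∑ s ∈ ((LinearEquiv.ofBijective (DirectSum.coeLinearMap grade) hintl).symm n).support,
      (((LinearEquiv.ofBijective (DirectSum.coeLinearMap grade) hintl).symm n) s : N) = n := by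
  set e := LinearEquiv.ofBijective (DirectSum.coeLinearMap grade) hintl with he
  calc ∑ s ∈ (e.symm n).support, ((e.symm n) s : N)
      = ∑ s ∈ (e.symm n).support, e (DirectSum.of (fun i => ↥(grade i)) s ((e.symm n) s)) := by
        refine Finset.sum_congr rfl fun s _ => ?_
        simp [he, LinearEquiv.ofBijective_apply, DirectSum.coeLinearMap_of]
        exact (DirectSum.coeLinearMap_of grade s _).symm
    _ = e (∑ s ∈ (e.symm n).support, DirectSum.of (fun i => ↥(grade i)) s ((e.symm n) s)) :=
        (map_sum e _ _).symm
    _ = e (e.symm n) := by rw [DirectSum.sum_support_of]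
    _ = n := e.apply_symm_apply n

end Proj

section Key

variable {K : Type u} [Field K] {Γ : Type v} [Monoid Γ] [LinearOrder Γ] [DecidableEq Γ]
variable {A : Type w} [Ring A] [Algebra K A] {FA : AlgFiltration K Γ A}
variable {B : Type x} [Ring B] [Algebra K B] (GA : AssocGraded K Γ FA B)
variable {M : Type y} [AddCommGroup M] [Module K M] [Module A M] [IsScalarTower K A M]

theorem keyFil [WellFoundedLT Γ]
    (FM : ModFiltration K Γ FA M)
    {N : Type*} [AddCommGroup N] [Module K N] [Module B N] [IsScalarTower K B N]
    (GM : AssocGradedMod K Γ GA FM N)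
    {J : Type*} (ξ : J → M) (γd : J → Γ)
    (hmem : ∀ i, ξ i ∈ FM.F (γd i))
    (hspan : Submodule.span B (Set.range fun i => GM.σ (γd i) ⟨ξ i, hmem i⟩) = ⊤) :
    ∀ γ : Γ, FM.F γ = genFil FA ξ γd γ := by
  classical
  intro γ
  induction γ using WellFoundedLT.induction with
  | _ γ IH => ?_
  refine le_antisymm ?_ ?_
  swap
  · rw [genFil_eq_span]
    rintro x hx
    refine Submodule.span_le.2 ?_ hx
    rintro x' ⟨i, si, a, hle, ha, rfl⟩
    exact FM.mono hle (FM.smul_mem ha (hmem i))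
  intro m hm
  -- claim: for every `b : B` and `j : J`, the γ-component of `b • σ(ξ j)` is `σ γ` of an
  -- element of `genFil γ`.
  have claim1 : ∀ (b : B) (j : J), ∃ t : FM.F γ, (t : M) ∈ genFil FA ξ γd γ ∧
      gradeProj GM.grade GM.internal γ (b • GM.σ (γd j) ⟨ξ j, hmem j⟩) = GM.σ γ t := by
    intro b j
    set eB := LinearEquiv.ofBijective (DirectSum.coeLinearMap GA.grade) GA.internal with heB
    set x := eB.symm b with hx
    have hb : b = ∑ s ∈ x.support, ((x s : B)) := (sum_support_eq GA.grade GA.internal b).symm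
    have hsurj : ∀ s : Γ, ∃ a : FA.F s, GA.σ s a = (x s : B) := fun s => GA.σ_surj s _ (x s).2
    choose a ha using hsurj
    set t : Γ → FM.F γ := fun s =>
      if h : s * γd j = γ then ⟨(a s : A) • ξ j, h ▸ FM.smul_mem (a s).2 (hmem j)⟩ else 0
      with ht
    have hterm : ∀ s : Γ,
        gradeProj GM.grade GM.internal γ ((x s : B) • GM.σ (γd j) ⟨ξ j, hmem j⟩)
          = GM.σ γ (t s) ∧ ((t s : M) ∈ genFil FA ξ γd γ) := by
      intro s
      have hsm : (x s : B) • GM.σ (γd j) ⟨ξ j, hmem j⟩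
          = GM.σ (s * γd j) ⟨(a s : A) • ξ j, FM.smul_mem (a s).2 (hmem j)⟩ := by
        rw [← ha s, GM.σ_smul]
      rw [hsm, gradeProj_of_mem GM.internal (GM.σ_mem _ _)]
      by_cases h : s * γd j = γ
      · subst h
        simp only [if_pos rfl, ht, dif_pos rfl]
        exact ⟨rfl, mem_genFil FA ξ γd j le_rfl (a s).2⟩
      · simp only [if_neg h, ht, dif_neg h]
        exact ⟨(map_zero _).symm, by simp⟩
    refine ⟨∑ s ∈ x.support, t s, ?_, ?_⟩
    · rw [AddSubmonoidClass.coe_finset_sum]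
      exact sum_mem fun s _ => (hterm s).2
    · calc gradeProj GM.grade GM.internal γ (b • GM.σ (γd j) ⟨ξ j, hmem j⟩)
          = gradeProj GM.grade GM.internal γ
              ((∑ s ∈ x.support, (x s : B)) • GM.σ (γd j) ⟨ξ j, hmem j⟩) := by rw [← hb]
        _ = ∑ s ∈ x.support,
              gradeProj GM.grade GM.internal γ ((x s : B) • GM.σ (γd j) ⟨ξ j, hmem j⟩) := by
            rw [Finset.sum_smul, map_sum]
        _ = ∑ s ∈ x.support, GM.σ γ (t s) := Finset.sum_congr rfl fun s _ => (hterm s).1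
        _ = GM.σ γ (∑ s ∈ x.support, t s) := (map_sum _ _ _).symm
  have hσ : GM.σ γ ⟨m, hm⟩ ∈
      Submodule.span B (Set.range fun i => GM.σ (γd i) ⟨ξ i, hmem i⟩) := by
    rw [hspan]; exact Submodule.mem_top
  obtain ⟨c, hc⟩ := Finsupp.mem_span_range_iff_exists_finsupp.1 hσ
  choose t htmem hteq using fun j : J => claim1 (c j) j
  set T : FM.F γ := ∑ j ∈ c.support, t j with hT
  have hTmem : (T : M) ∈ genFil FA ξ γd γ := by
    rw [hT, AddSubmonoidClass.coe_finset_sum]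
    exact sum_mem fun j _ => htmem j
  have h0 : GM.σ γ (⟨m, hm⟩ - T) = 0 := by
    have h3 : (∑ j ∈ c.support, c j • GM.σ (γd j) ⟨ξ j, hmem j⟩) = GM.σ γ ⟨m, hm⟩ := hc
    have h4 : gradeProj GM.grade GM.internal γ (GM.σ γ ⟨m, hm⟩) = GM.σ γ ⟨m, hm⟩ := by
      rw [gradeProj_of_mem GM.internal (GM.σ_mem _ _), if_pos rfl]
    rw [map_sub, hT, map_sum, sub_eq_zero]
    calc GM.σ γ ⟨m, hm⟩ = gradeProj GM.grade GM.internal γ (GM.σ γ ⟨m, hm⟩) := h4.symm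
      _ = gradeProj GM.grade GM.internal γ
            (∑ j ∈ c.support, c j • GM.σ (γd j) ⟨ξ j, hmem j⟩) := by rw [h3]
      _ = ∑ j ∈ c.support,
            gradeProj GM.grade GM.internal γ (c j • GM.σ (γd j) ⟨ξ j, hmem j⟩) := map_sum _ _ _
      _ = ∑ j ∈ c.support, GM.σ γ (t j) := Finset.sum_congr rfl fun j _ => hteq j
  have hsub : m - (T : M) ∈ FM.Fstar γ := by
    have := (GM.σ_ker γ _).1 h0
    simpa using this
  rw [mem_Fstar_iff] at hsub
  have hsub' : m - (T : M) ∈ genFil FA ξ γd γ := by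
    rcases hsub with h | ⟨γ', hγ', hgm⟩
    · rw [h]; exact zero_mem _
    · exact genFil_mono FA ξ γd hγ'.le ((IH γ' hγ') ▸ hgm)
  have : m = (m - (T : M)) + (T : M) := by abel
  rw [this]
  exact add_mem hsub' hTmem

theorem keySpan [WellFoundedLT Γ]
    (FM : ModFiltration K Γ FA M)
    {N : Type*} [AddCommGroup N] [Module K N] [Module B N] [IsScalarTower K B N]
    (GM : AssocGradedMod K Γ GA FM N)
    {J : Type*} (ξ : J → M) (γd : J → Γ)
    (hmem : ∀ i, ξ i ∈ FM.F (γd i))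
    (hspan : Submodule.span B (Set.range fun i => GM.σ (γd i) ⟨ξ i, hmem i⟩) = ⊤) :
    Submodule.span A (Set.range ξ) = ⊤ := by
  rw [eq_top_iff]
  intro m _
  obtain ⟨γ, hγ⟩ := FM.exhaustive m
  rw [keyFil GA FM GM ξ γd hmem hspan γ] at hγ
  exact genFil_le_span FA ξ γd γ hγ

end Key


section Gen

variable {K : Type u} [Field K] {Γ : Type v} [Monoid Γ] [LinearOrder Γ]
variable {A : Type w} [Ring A] [Algebra K A] (FA : AlgFiltration K Γ A)
variable {M : Type y} [AddCommGroup M] [Module K M] [Module A M] [IsScalarTower K A M]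
variable {J : Type*} (ξ : J → M) (γd : J → Γ)

lemma genFil_smul [CovariantClass Γ Γ (· * ·) (· < ·)] {γ₁ γ₂ : Γ} {a : A} {m : M}
    (ha : a ∈ FA.F γ₁) (hm : m ∈ genFil FA ξ γd γ₂) : a • m ∈ genFil FA ξ γd (γ₁ * γ₂) := by
  have hmul : ∀ {s : Γ}, s ≤ γ₂ → γ₁ * s ≤ γ₁ * γ₂ := fun {s} h =>
    h.lt_or_eq.elim (fun h => (mul_lt_mul_right h γ₁).le) (fun h => h ▸ le_rfl)
  rw [genFil_eq_span] at hm ⊢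
  induction hm using Submodule.span_induction with
  | mem x hx =>
      obtain ⟨i, si, b, hle, hb, rfl⟩ := hx
      rw [smul_smul]
      refine Submodule.subset_span ⟨i, γ₁ * si, a * b, ?_, FA.mul_mem ha hb, rfl⟩
      rw [mul_assoc]; exact hmul hle
  | zero => rw [smul_zero]; exact zero_mem _
  | add x y hx hy px py => rw [smul_add]; exact add_mem px py
  | smul k x hx px => rw [smul_comm]; exact Submodule.smul_mem _ k px

/-- The filtration of `M` determined by generators `ξ` and degrees `γd`. -/
def genFilMod [CovariantClass Γ Γ (· * ·) (· < ·)]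
    (hspanA : Submodule.span A (Set.range ξ) = ⊤) : ModFiltration K Γ FA M where
  F := genFil FA ξ γd
  mono _ _ h := genFil_mono FA ξ γd h
  exhaustive := by
    intro m
    have hm : m ∈ Submodule.span A (Set.range ξ) := by rw [hspanA]; exact Submodule.mem_top
    induction hm using Submodule.span_induction with
    | mem x hx =>
        obtain ⟨i, rfl⟩ := hx
        exact ⟨γd i, by simpa using mem_genFil FA ξ γd i (one_mul (γd i)).le FA.one_mem⟩
    | zero => exact ⟨1, zero_mem _⟩
    | add x y hx hy px py =>
        obtain ⟨g1, h1⟩ := px; obtain ⟨g2, h2⟩ := py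
        exact ⟨max g1 g2, add_mem (genFil_mono FA ξ γd (le_max_left _ _) h1)
          (genFil_mono FA ξ γd (le_max_right _ _) h2)⟩
    | smul a x hx px =>
        obtain ⟨g, h⟩ := px
        obtain ⟨α, hα⟩ := FA.exhaustive a
        exact ⟨α * g, genFil_smul FA ξ γd hα h⟩
  smul_mem := fun ha hm => genFil_smul FA ξ γd ha hm

lemma genFilMod_not_mem_Fstar [CovariantClass Γ Γ (swap (· * ·)) (· < ·)]
    (hone : ∀ γ : Γ, (1:Γ) ≤ γ)
    (hspanA : Submodule.span A (Set.range ξ) = ⊤)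
    (hmin : ∀ s : Set J, Submodule.span A (ξ '' s) = ⊤ → s = Set.univ)
    {FM : ModFiltration K Γ FA M} (hF : ∀ γ, FM.F γ = genFil FA ξ γd γ)
    (i : J) : ξ i ∉ FM.Fstar (γd i) := by
  intro hst
  rw [mem_Fstar_iff] at hst
  have hmemc : ξ i ∈ Submodule.span A (ξ '' {i}ᶜ) := by
    rcases hst with h | ⟨γ', hγ', hgm⟩
    · rw [h]; exact zero_mem _
    · rw [hF, genFil_eq_span] at hgm
      have hle : Submodule.span K (genSet FA ξ γd γ') ≤
          (Submodule.span A (ξ '' {i}ᶜ)).restrictScalars K := by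
        refine Submodule.span_le.2 ?_
        rintro x ⟨j, sj, a, hle, ha, rfl⟩
        have hji : j ≠ i := by
          rintro rfl
          have h1 : γd j ≤ sj * γd j := by
            rcases (hone sj).lt_or_eq with h | h
            · exact le_of_lt (by simpa using mul_lt_mul_left h (γd j))
            · rw [← h, one_mul]
          exact absurd hγ' (not_lt.2 (h1.trans hle))
        exact Submodule.smul_mem _ a (Submodule.subset_span ⟨j, by simpa using hji, rfl⟩)
      exact hle hgm
  have htop : Submodule.span A (ξ '' {i}ᶜ) = ⊤ := by
    rw [eq_top_iff, ← hspanA]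
    refine Submodule.span_le.2 ?_
    rintro x ⟨j, rfl⟩
    by_cases h : j = i
    · subst h; exact hmemc
    · exact Submodule.subset_span ⟨j, by simpa using h, rfl⟩
  have huniv := hmin _ htop
  have : i ∈ ({i}ᶜ : Set J) := huniv ▸ Set.mem_univ i
  simp at this

lemma genSpanTop [DecidableEq Γ]
    {B : Type x} [Ring B] [Algebra K B] (GA : AssocGraded K Γ FA B)
    {FM : ModFiltration K Γ FA M} (hF : ∀ γ, FM.F γ = genFil FA ξ γd γ)
    (hmem : ∀ i, ξ i ∈ FM.F (γd i))
    {N : Type*} [AddCommGroup N] [Module K N] [Module B N] [IsScalarTower K B N]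
    (GM : AssocGradedMod K Γ GA FM N) :
    Submodule.span B (Set.range fun i => GM.σ (γd i) ⟨ξ i, hmem i⟩) = ⊤ := by
  set P := (Submodule.span B (Set.range fun i => GM.σ (γd i) ⟨ξ i, hmem i⟩)).restrictScalars K
    with hP
  have hgr : ∀ γ, GM.grade γ ≤ P := by
    intro γ y hy
    obtain ⟨mm, rfl⟩ := GM.σ_surj γ y hy
    have hmm : (mm : M) ∈ Submodule.span K (genSet FA ξ γd γ) := by
      rw [← genFil_eq_span, ← hF]; exact mm.2
    have main : ∀ (z : M), z ∈ Submodule.span K (genSet FA ξ γd γ) →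
        ∀ h : z ∈ FM.F γ, GM.σ γ ⟨z, h⟩ ∈ P := by
      intro z hz
      induction hz using Submodule.span_induction with
      | mem x hx =>
          intro h
          obtain ⟨j, sj, a, hle, ha, rfl⟩ := hx
          rcases hle.lt_or_eq with hlt | heq
          · have h0 : GM.σ γ ⟨a • ξ j, h⟩ = 0 := by
              rw [GM.σ_ker]
              exact mem_Fstar_of_lt FM hlt (FM.smul_mem ha (hmem j))
            rw [h0]; exact zero_mem _
          · subst heq
            show GM.σ (sj * γd j) ⟨(a : A) • ξ j, FM.smul_mem ha (hmem j)⟩ ∈ P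
            rw [← GM.σ_smul ⟨a, ha⟩ ⟨ξ j, hmem j⟩]
            exact Submodule.smul_mem
              (Submodule.span B (Set.range fun i => GM.σ (γd i) ⟨ξ i, hmem i⟩)) _
              (Submodule.subset_span ⟨j, rfl⟩)
      | zero =>
          intro h
          have hz0 : (⟨0, h⟩ : FM.F γ) = 0 := rfl
          rw [hz0, map_zero]; exact zero_mem _
      | add x y hx hy px py =>
          intro h
          have hhx : x ∈ FM.F γ := by rw [hF, genFil_eq_span]; exact hx
          have hhy : y ∈ FM.F γ := by rw [hF, genFil_eq_span]; exact hy
          have hsum : (⟨x + y, h⟩ : FM.F γ) = ⟨x, hhx⟩ + ⟨y, hhy⟩ := rfl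
          rw [hsum, map_add]; exact add_mem (px hhx) (py hhy)
      | smul k x hx px =>
          intro h
          have hhx : x ∈ FM.F γ := by rw [hF, genFil_eq_span]; exact hx
          have hsm : (⟨k • x, h⟩ : FM.F γ) = k • (⟨x, hhx⟩ : FM.F γ) := rfl
          rw [hsm, map_smul]; exact Submodule.smul_mem _ _ (px hhx)
    have := main (mm : M) hmm mm.2
    simpa using this
  have htop : (⊤ : Submodule K N) ≤ P := by
    rw [← GM.internal.submodule_iSup_eq_top]
    exact iSup_le hgr
  rw [eq_top_iff]
  intro y _
  exact htop Submodule.mem_top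

theorem keyFinite [DecidableEq Γ] [WellFoundedLT Γ]
    {B : Type x} [Ring B] [Algebra K B] (GA : AssocGraded K Γ FA B)
    (FM : ModFiltration K Γ FA M)
    {N : Type*} [AddCommGroup N] [Module K N] [Module B N] [IsScalarTower K B N]
    (GM : AssocGradedMod K Γ GA FM N) (hfin : Module.Finite B N) :
    Module.Finite A M := by
  classical
  obtain ⟨S, hS⟩ := Module.finite_def.mp hfin
  set eN := LinearEquiv.ofBijective (DirectSum.coeLinearMap GM.grade) GM.internal with heN
  set T : Finset N :=
    S.biUnion (fun nn => (eN.symm nn).support.image fun s => ((eN.symm nn) s : N)) with hTdef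
  have hThom : ∀ y ∈ T, ∃ γ, y ∈ GM.grade γ := by
    intro y hy
    simp only [hTdef, Finset.mem_biUnion, Finset.mem_image] at hy
    obtain ⟨nn, _, s, _, rfl⟩ := hy
    exact ⟨s, ((eN.symm nn) s).2⟩
  have hJ : ∀ j : {y : N // y ∈ T}, ∃ γ, (j : N) ∈ GM.grade γ := fun j => hThom j j.2
  choose γd hγd using hJ
  have hsurj : ∀ j : {y : N // y ∈ T}, ∃ mξ : FM.F (γd j), GM.σ (γd j) mξ = (j : N) :=
    fun j => GM.σ_surj _ _ (hγd j)
  choose mξ hmξ using hsurj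
  set ξ : {y : N // y ∈ T} → M := fun j => (mξ j : M) with hξ
  have hmem : ∀ j, ξ j ∈ FM.F (γd j) := fun j => (mξ j).2
  have hσξ : ∀ j, GM.σ (γd j) ⟨ξ j, hmem j⟩ = (j : N) := by
    intro j
    have he : (⟨ξ j, hmem j⟩ : FM.F (γd j)) = mξ j := rfl
    rw [he]; exact hmξ j
  have hrange : (Set.range fun j : {y : N // y ∈ T} => GM.σ (γd j) ⟨ξ j, hmem j⟩)
      = (T : Set N) := by
    ext y
    constructor
    · rintro ⟨j, rfl⟩
      show GM.σ (γd j) ⟨ξ j, hmem j⟩ ∈ (T : Set N)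
      rw [hσξ j]; exact j.2
    · intro hy
      exact ⟨⟨y, hy⟩, hσξ ⟨y, hy⟩⟩
  have hspan : Submodule.span B
      (Set.range fun j : {y : N // y ∈ T} => GM.σ (γd j) ⟨ξ j, hmem j⟩) = ⊤ := by
    rw [hrange, eq_top_iff, ← hS]
    refine Submodule.span_le.2 ?_
    intro nn hnn
    have hdec := sum_support_eq GM.grade GM.internal nn
    rw [show nn = ∑ s ∈ (eN.symm nn).support, ((eN.symm nn) s : N) from hdec.symm]
    refine sum_mem fun s hs => ?_
    refine Submodule.subset_span ?_
    refine Finset.mem_coe.2 (Finset.mem_biUnion.2 ⟨nn, Finset.mem_coe.1 hnn, ?_⟩)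
    exact Finset.mem_image.2 ⟨s, hs, rfl⟩
  have hspanA := keySpan GA FM GM ξ γd hmem hspan
  exact ⟨⟨(Set.finite_range ξ).toFinset, by rw [Set.Finite.coe_toFinset]; exact hspanA⟩⟩

end Gen

/-!
STATEMENT 6.  (i) If FM is a Γ-filtration of M and G(M) = Σ_{i∈J} G(A)·σ(ξ_i)
with d(ξ_i) = γ_i, then M = Σ_{i∈J} A·ξ_i and
F_γM = Σ_i (Σ_{s≼γ, s_iγ_i=s} F_{s_i}A)·ξ_i; in particular if G(M) is a
finitely generated G(A)-module then M is a finitely generated A-module.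
(ii) If M = Σ_{i=1}^n A·ξ_i with {ξ_1,…,ξ_n} a minimal set of generators, then
for arbitrary γ_1,…,γ_n ∈ Γ the formula above defines a Γ-filtration FM of M
for which each ξ_i has degree γ_i and G(M) = Σ_{i=1}^n G(A)·σ(ξ_i); in
particular G(M) is a finitely generated G(A)-module.
-/

theorem statement6 [DecidableEq Γ]
    [CovariantClass Γ Γ (· * ·) (· < ·)] [CovariantClass Γ Γ (swap (· * ·)) (· < ·)]
    [WellFoundedLT Γ] (hone : ∀ γ : Γ, (1 : Γ) ≤ γ)
    {A : Type w} [Ring A] [Algebra K A] (FA : AlgFiltration K Γ A)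
    {B : Type x} [Ring B] [Algebra K B] (GA : AssocGraded K Γ FA B)
    (M : Type y) [AddCommGroup M] [Module K M] [Module A M] [IsScalarTower K A M] :
    -- (i)
    (∀ (FM : ModFiltration K Γ FA M)
      (N : Type z) (_ : AddCommGroup N) (_ : Module K N) (_ : Module B N)
      (_ : IsScalarTower K B N) (GM : AssocGradedMod K Γ GA FM N)
      (J : Type z) (ξ : J → M) (γd : J → Γ)
      (hmem : ∀ i, ξ i ∈ FM.F (γd i)) (_ : ∀ i, ξ i ∉ FM.Fstar (γd i))
      (_ : Submodule.span B (Set.range fun i => GM.σ (γd i) ⟨ξ i, hmem i⟩) = ⊤),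
      Submodule.span A (Set.range ξ) = ⊤ ∧
      (∀ γ : Γ, FM.F γ = genFil FA ξ γd γ)) ∧
    -- (i), "in particular"
    (∀ (FM : ModFiltration K Γ FA M)
      (N : Type z) (_ : AddCommGroup N) (_ : Module K N) (_ : Module B N)
      (_ : IsScalarTower K B N) (_ : AssocGradedMod K Γ GA FM N),
      Module.Finite B N → Module.Finite A M) ∧
    -- (ii)
    (∀ (n : ℕ) (ξ : Fin n → M),
      Submodule.span A (Set.range ξ) = ⊤ →
      (∀ s : Set (Fin n), Submodule.span A (ξ '' s) = ⊤ → s = Set.univ) →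
      ∀ γd : Fin n → Γ,
        ∃ FM : ModFiltration K Γ FA M,
          (∀ γ : Γ, FM.F γ = genFil FA ξ γd γ) ∧
          ∃ hmem : ∀ i, ξ i ∈ FM.F (γd i),
            (∀ i, ξ i ∉ FM.Fstar (γd i)) ∧
            ∀ (N : Type z) (_ : AddCommGroup N) (_ : Module K N) (_ : Module B N)
              (_ : IsScalarTower K B N) (GM : AssocGradedMod K Γ GA FM N),
              Submodule.span B (Set.range fun i => GM.σ (γd i) ⟨ξ i, hmem i⟩) = ⊤ ∧
              Module.Finite B N) := by
  refine ⟨?_, ?_, ?_⟩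
  · intro FM N _ _ _ _ GM J ξ γd hmem _ hspan
    exact ⟨keySpan GA FM GM ξ γd hmem hspan, keyFil GA FM GM ξ γd hmem hspan⟩
  · intro FM N _ _ _ _ GM hfin
    exact keyFinite FA GA FM GM hfin
  · intro n ξ hspanA hmin γd
    have hmem : ∀ i, ξ i ∈ (genFilMod FA ξ γd hspanA).F (γd i) := fun i => by
      show ξ i ∈ genFil FA ξ γd (γd i)
      simpa using mem_genFil FA ξ γd i (one_mul (γd i)).le FA.one_mem
    refine ⟨genFilMod FA ξ γd hspanA, fun γ => rfl, hmem, fun i =>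
      genFilMod_not_mem_Fstar FA ξ γd hone hspanA hmin (fun γ => rfl) i, ?_⟩
    intro N _ _ _ _ GM
    have hs := genSpanTop FA ξ γd GA (fun γ => rfl) hmem GM
    refine ⟨hs, ?_⟩
    refine ⟨⟨(Set.finite_range fun i => GM.σ (γd i) ⟨ξ i, hmem i⟩).toFinset, ?_⟩⟩
    rw [Set.Finite.coe_toFinset]; exact hs
end

section
/- Let A be a Γ-filtered K-algebra with Γ-filtration FA and associated Γ-graded algebra G(A). (i) If G(A) is Γ-graded left Noetherian (every Γ-graded left ideal of G(A) is finitely generated; equivalently, G(A) satisfies the ascending chain condition on left ideals), then every finitely generated A-module is a Noetherian module; in particular A is left Noetherian. (ii) If G(A) satisfies the descending chain condition on left ideals, then every finitely generated A-module is an Artinian module; in particular A is left Artinian. -/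
/-!
Common setting for the lifting results: K a field; Γ an ordered monoid whose
order ≺ is a well-order, compatible with multiplication on both sides, and
whose identity element is the smallest element (the latter is the hypothesis
`(hone : ∀ γ : Γ, 1 ≤ γ)` in the theorem below).
`AlgFiltration K Γ A` is a Γ-filtration FA of the K-algebra A;
`AssocGraded FA B` axiomatises "B is the associated Γ-graded K-algebra G(A)":
it records the Γ-grading of B and, for each γ, the canonical K-linear map
σ γ : F_γA → G(A) onto the component G(A)_γ = F_γA/F*_γA (surjective onto
`grade γ`, with kernel F*_γA), multiplicative and unital.  These data
determine B up to a canonical isomorphism of Γ-graded K-algebras, so the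
structure is a faithful rendering of G(A).  Similarly `ModFiltration` and
`AssocGradedMod` render Γ-filtered A-modules and their associated Γ-graded
G(A)-modules.
-/

open Function

universe u v w x y

variable (K : Type u) [Field K] (Γ : Type v) [Monoid Γ] [LinearOrder Γ]

universe z

/-!
STATEMENT 9.  (i) If G(A) is (Γ-graded) left Noetherian — equivalently, G(A)
satisfies the ascending chain condition on left ideals, i.e. `IsNoetherian B B`
— then every finitely generated A-module is Noetherian; in particular A is
left Noetherian.  (ii) If G(A) satisfies the descending chain condition on
left ideals (`IsArtinian B B`), then every finitely generated A-module is
Artinian; in particular A is left Artinian.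
-/


section Aux

variable {K : Type u} [Field K] {Γ : Type v} [Monoid Γ] [LinearOrder Γ] [DecidableEq Γ]
  {A : Type w} [Ring A] [Algebra K A] {FA : AlgFiltration K Γ A}
  {B : Type x} [Ring B] [Algebra K B]

variable (GA : AssocGraded K Γ FA B)

/-- Homogeneous "generators" of `G(I)` for a left ideal `I` of `A`. -/
def gSet (I : Submodule A A) : Set B :=
  {b | ∃ (γ : Γ) (a : FA.F γ), (a : A) ∈ I ∧ GA.σ γ a = b}

theorem gSet_mono {I J : Submodule A A} (h : I ≤ J) : gSet GA I ⊆ gSet GA J := by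
  rintro b ⟨γ, a, haI, rfl⟩
  exact ⟨γ, a, h haI, rfl⟩

theorem mul_gSet_mem (I : Submodule A A) (b : B) {s : B} (hs : s ∈ gSet GA I) :
    b * s ∈ Submodule.span K (gSet GA I) := by
  have hb : b ∈ ⨆ γ, GA.grade γ := by
    rw [GA.internal.submodule_iSup_eq_top]; trivial
  refine Submodule.iSup_induction (motive := fun b => b * s ∈ Submodule.span K (gSet GA I)) _ hb ?_ (by simp) ?_
  · intro δ c hc
    obtain ⟨c', rfl⟩ := GA.σ_surj δ c hc
    obtain ⟨γ', a, haI, rfl⟩ := hs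
    rw [GA.σ_mul]
    refine Submodule.subset_span ⟨δ * γ', _, ?_, rfl⟩
    simpa [smul_eq_mul] using I.smul_mem (c' : A) haI
  · intro u v hu hv
    rw [add_mul]; exact add_mem hu hv

theorem mem_spanK_of_mem_spanB (I : Submodule A A) {y : B}
    (hy : y ∈ Submodule.span B (gSet GA I)) : y ∈ Submodule.span K (gSet GA I) := by
  have smul_closed : ∀ (b : B) {z : B}, z ∈ Submodule.span K (gSet GA I) →
      b * z ∈ Submodule.span K (gSet GA I) := by
    intro b z hz
    induction hz using Submodule.span_induction with
    | mem s hs => exact mul_gSet_mem GA I b hs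
    | zero => simp
    | add u v _ _ hu hv => rw [mul_add]; exact add_mem hu hv
    | smul k u _ hu => rw [mul_smul_comm]; exact Submodule.smul_mem _ k hu
  induction hy using Submodule.span_induction with
  | mem s hs => exact Submodule.subset_span hs
  | zero => simp
  | add u v _ _ hu hv => exact add_mem hu hv
  | smul b u _ hu => simpa [smul_eq_mul] using smul_closed b hu

/-- Key lemma: a homogeneous element of degree `γ` of `G(I)` is the symbol of an
element of `I ∩ F_γ A`. -/
theorem exists_symbol (I : Submodule A A) {γ : Γ} {y : B}
    (hy : y ∈ Submodule.span B (gSet GA I)) (hg : y ∈ GA.grade γ) :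
    ∃ a : FA.F γ, (a : A) ∈ I ∧ GA.σ γ a = y := by
  have hy' := mem_spanK_of_mem_spanB GA I hy
  set e := LinearEquiv.ofBijective (DirectSum.coeLinearMap GA.grade) GA.internal with he
  have main : ∃ a : FA.F γ, (a : A) ∈ I ∧ GA.σ γ a = ((e.symm y) γ : B) := by
    clear hg hy
    induction hy' using Submodule.span_induction with
    | mem s hs =>
      obtain ⟨γ', a, haI, rfl⟩ := hs
      rcases eq_or_ne γ' γ with rfl | hne
      · exact ⟨a, haI, by rw [GA.internal.ofBijective_coeLinearMap_of_mem (GA.σ_mem γ' a)]⟩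
      · refine ⟨0, I.zero_mem, ?_⟩
        rw [GA.internal.ofBijective_coeLinearMap_of_mem_ne hne (GA.σ_mem γ' a)]
        simp
    | zero => exact ⟨0, I.zero_mem, by simp⟩
    | add u v _ _ hu hv =>
      obtain ⟨a, haI, ha⟩ := hu
      obtain ⟨b, hbI, hb⟩ := hv
      exact ⟨a + b, I.add_mem haI hbI, by rw [map_add, map_add]; push_cast [ha, hb]; rfl⟩
    | smul k u _ hu =>
      obtain ⟨a, haI, ha⟩ := hu
      exact ⟨k • a, by simpa using I.smul_of_tower_mem k haI,
        by rw [map_smul, map_smul]; push_cast [ha]; rfl⟩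
  obtain ⟨a, haI, ha⟩ := main
  refine ⟨a, haI, ?_⟩
  rw [ha, GA.internal.ofBijective_coeLinearMap_of_mem hg]

theorem exists_of_mem_Fstar {x : A} {γ : Γ} (hx : x ∈ FA.Fstar γ) (hne : x ≠ 0) :
    ∃ γ' < γ, x ∈ FA.F γ' := by
  by_cases h : ∃ γ' : Γ, γ' < γ
  · haveI : Nonempty {γ' : Γ // γ' < γ} := ⟨⟨h.choose, h.choose_spec⟩⟩
    have hx' : x ∈ ⨆ p : {γ' : Γ // γ' < γ}, FA.F p.1 := by
      rw [iSup_subtype]; exact hx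
    have hdir : Directed (· ≤ ·) fun p : {γ' : Γ // γ' < γ} => FA.F p.1 := by
      intro p q
      rcases le_total p.1 q.1 with hpq | hpq
      · exact ⟨q, FA.mono hpq, le_rfl⟩
      · exact ⟨p, le_rfl, FA.mono hpq⟩
    obtain ⟨p, hp⟩ := (Submodule.mem_iSup_of_directed _ hdir).mp hx'
    exact ⟨p.1, p.2, hp⟩
  · exfalso
    apply hne
    have : FA.Fstar γ = ⊥ := by
      apply le_bot_iff.mp
      refine iSup₂_le fun γ' hγ' => absurd ⟨γ', hγ'⟩ h
    simpa [this] using hx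

variable [WellFoundedLT Γ]

theorem gspan_strictMono {I J : Submodule A A} (h : I < J) :
    Submodule.span B (gSet GA I) < Submodule.span B (gSet GA J) := by
  rw [SetLike.lt_iff_le_and_exists]
  refine ⟨Submodule.span_mono (gSet_mono GA h.le), ?_⟩
  obtain ⟨x₀, hx₀J, hx₀I⟩ := SetLike.exists_of_lt h
  obtain ⟨γ₀', hγ₀'⟩ := FA.exhaustive x₀
  set S : Set Γ := {γ : Γ | ∃ x : A, x ∈ FA.F γ ∧ x ∈ J ∧ x ∉ I} with hS
  have hSne : S.Nonempty := ⟨γ₀', x₀, hγ₀', hx₀J, hx₀I⟩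
  obtain ⟨γ, ⟨x, hxF, hxJ, hxI⟩, hmin⟩ := (IsWellFounded.wf (r := (· < · : Γ → Γ → Prop))).has_min S hSne
  refine ⟨GA.σ γ ⟨x, hxF⟩, Submodule.subset_span ⟨γ, ⟨x, hxF⟩, hxJ, rfl⟩, fun hmem => ?_⟩
  obtain ⟨a, haI, ha⟩ := exists_symbol GA I hmem (GA.σ_mem γ _)
  have hker : (x - (a : A)) ∈ FA.Fstar γ := by
    have : GA.σ γ (⟨x, hxF⟩ - a) = 0 := by rw [map_sub, ha, sub_self]
    exact (GA.σ_ker γ (⟨x, hxF⟩ - a)).mp this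
  have hne : x - (a : A) ≠ 0 := fun h0 => hxI (by rwa [sub_eq_zero.mp h0])
  obtain ⟨γ', hγ'γ, hmem'⟩ := exists_of_mem_Fstar hker hne
  exact hmin γ' ⟨x - a, hmem', J.sub_mem hxJ (h.le haI), fun hc => hxI (by
    have := I.add_mem hc haI
    simpa using this)⟩ hγ'γ

include GA in
theorem noetherian_transfer (hB : IsNoetherian B B) : IsNoetherian A A := by
  rw [isNoetherian_iff] at hB ⊢
  exact Subrelation.wf
    (fun {I J} (hlt : J < I) => (gspan_strictMono GA hlt : _))
    (InvImage.wf (fun I : Submodule A A => Submodule.span B (gSet GA I)) hB)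

include GA in
theorem artinian_transfer (hB : IsArtinian B B) : IsArtinian A A := by
  rw [isArtinian_iff] at hB ⊢
  exact Subrelation.wf
    (fun {I J} (hlt : I < J) => (gspan_strictMono GA hlt : _))
    (InvImage.wf (fun I : Submodule A A => Submodule.span B (gSet GA I)) hB)

end Aux

theorem statement9 [DecidableEq Γ]
    [CovariantClass Γ Γ (· * ·) (· < ·)] [CovariantClass Γ Γ (swap (· * ·)) (· < ·)]
    [WellFoundedLT Γ] (hone : ∀ γ : Γ, (1 : Γ) ≤ γ)
    {A : Type w} [Ring A] [Algebra K A] (FA : AlgFiltration K Γ A)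
    {B : Type x} [Ring B] [Algebra K B] (GA : AssocGraded K Γ FA B) :
    -- (i)
    (IsNoetherian B B →
      (∀ (M : Type y) (_ : AddCommGroup M) (_ : Module K M) (_ : Module A M)
        (_ : IsScalarTower K A M), Module.Finite A M → IsNoetherian A M) ∧
      IsNoetherian A A) ∧
    -- (ii)
    (IsArtinian B B →
      (∀ (M : Type y) (_ : AddCommGroup M) (_ : Module K M) (_ : Module A M)
        (_ : IsScalarTower K A M), Module.Finite A M → IsArtinian A M) ∧
      IsArtinian A A) := by
  constructor
  · intro hB
    have hA : IsNoetherian A A := noetherian_transfer GA hB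
    haveI : IsNoetherianRing A := hA
    refine ⟨?_, hA⟩
    intro M _ _ _ _ hfin
    exact isNoetherian_of_isNoetherianRing_of_finite A M
  · intro hB
    have hA : IsArtinian A A := artinian_transfer GA hB
    haveI : IsArtinianRing A := hA
    refine ⟨?_, hA⟩
    intro M _ _ _ _ hfin
    exact isArtinian_of_fg_of_artinian'
end

section
/- Let A be a Γ-filtered K-algebra and M a Γ-filtered left A-module with Γ-filtration FM. If G(M) is a flat G(A)-module, then M is a flat A-module. -/
/-!
Common setting for the lifting results: K a field; Γ an ordered monoid whose
order ≺ is a well-order, compatible with multiplication on both sides, and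
whose identity element is the smallest element (the latter is the hypothesis
`(hone : ∀ γ : Γ, 1 ≤ γ)` in the theorem below).
`AlgFiltration K Γ A` is a Γ-filtration FA of the K-algebra A;
`AssocGraded FA B` axiomatises "B is the associated Γ-graded K-algebra G(A)":
it records the Γ-grading of B and, for each γ, the canonical K-linear map
σ γ : F_γA → G(A) onto the component G(A)_γ = F_γA/F*_γA (surjective onto
`grade γ`, with kernel F*_γA), multiplicative and unital.  These data
determine B up to a canonical isomorphism of Γ-graded K-algebras, so the
structure is a faithful rendering of G(A).  Similarly `ModFiltration` and
`AssocGradedMod` render Γ-filtered A-modules and their associated Γ-graded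
G(A)-modules.
-/

open Function

universe u v w x y

variable (K : Type u) [Field K] (Γ : Type v) [Monoid Γ] [LinearOrder Γ]

universe z

/-- Flatness of a left module over a (possibly noncommutative) ring, rendered
by the standard equational criterion (equivalent to the definition that
tensoring preserves injectivity, in particular to injectivity of
`J ⊗_A M → A ⊗_A M` for every right ideal `J`): whenever `Σ_i a_i • m_i = 0`
there are `y_j ∈ M` and `b_{ij} ∈ A` with `m_i = Σ_j b_{ij} • y_j` and
`Σ_i a_i b_{ij} = 0` for all `j`. -/
def IsFlatModule (A : Type*) [Ring A] (M : Type*) [AddCommGroup M] [Module A M] : Prop :=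
  ∀ (n : ℕ) (a : Fin n → A) (m : Fin n → M), (∑ i, a i • m i) = 0 →
    ∃ (k : ℕ) (b : Fin n → Fin k → A) (y : Fin k → M),
      (∀ i, m i = ∑ j, b i j • y j) ∧ (∀ j, (∑ i, a i * b i j) = 0)


/-! ### Auxiliary machinery for the proof -/

section InternalHelpers

universe u' v'

variable {K : Type u'} [Field K] {Γ : Type v'} [DecidableEq Γ]
variable {W : Type*} [AddCommGroup W] [Module K W]

/-- From an internal grading: decompose any element into finitely many homogeneous pieces. -/
lemma internal_decomp (g : Γ → Submodule K W) (hint : DirectSum.IsInternal g) (w : W) :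
    ∃ f : Γ →₀ W, (∀ d, f d ∈ g d) ∧ (f.sum fun _ v => v) = w := by
  have hw : w ∈ iSup g := by rw [hint.submodule_iSup_eq_top]; trivial
  exact (Submodule.mem_iSup_iff_exists_finsupp g w).mp hw

/-- In an internal grading, if a finite sum of homogeneous pieces is zero, then the
sub-sum of pieces of any fixed degree is zero. -/
lemma internal_piece_zero (g : Γ → Submodule K W) (hint : DirectSum.IsInternal g)
    {κ : Type*} (P : Finset κ) (dg : κ → Γ) (v : κ → W)
    (hv : ∀ p ∈ P, v p ∈ g (dg p)) (h0 : ∑ p ∈ P, v p = 0) (d : Γ) :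
    ∑ p ∈ P.filter (fun p => dg p = d), v p = 0 := by
  classical
  set w : DirectSum Γ (fun d => g d) :=
    ∑ p ∈ P.attach, DirectSum.of (fun d => g d) (dg ↑p) ⟨v ↑p, hv ↑p p.2⟩ with hw
  have hcoe : DirectSum.coeAddMonoidHom g w = 0 := by
    rw [hw, map_sum]
    simp only [DirectSum.coeAddMonoidHom_of]
    rw [Finset.sum_attach P (fun p => v p)]
    exact h0
  have hw0 : w = 0 := hint.injective (by rw [hcoe, map_zero])
  have := congrArg (fun z => ((z d : g d) : W)) hw0
  simp only at this
  rw [hw, DFinsupp.finset_sum_apply] at this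
  have h2 : ∀ p ∈ P.attach,
      ((DirectSum.of (fun d => g d) (dg ↑p) ⟨v ↑p, hv ↑p p.2⟩ d : g d) : W)
        = if dg ↑p = d then v ↑p else 0 := by
    intro p _
    rw [DirectSum.coe_of_apply]
    split <;> simp
  rw [AddSubmonoidClass.coe_finset_sum, Finset.sum_congr rfl h2,
    Finset.sum_attach P (fun p => if dg p = d then v p else 0)] at this
  rw [Finset.sum_filter]
  simpa using this

/-- Variant: if a finite sum of homogeneous pieces equals a homogeneous element `w` of
degree `d₀`, the sub-sum of pieces of degree `d` is `w` when `d₀ = d` and `0` otherwise. -/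
lemma internal_piece_single (g : Γ → Submodule K W) (hint : DirectSum.IsInternal g)
    {κ : Type*} (P : Finset κ) (dg : κ → Γ) (v : κ → W)
    (hv : ∀ p ∈ P, v p ∈ g (dg p)) {d₀ : Γ} {w : W} (hw : w ∈ g d₀)
    (heq : ∑ p ∈ P, v p = w) (d : Γ) :
    ∑ p ∈ P.filter (fun p => dg p = d), v p = if d₀ = d then w else 0 := by
  classical
  have hinj : ∀ a ∈ P, ∀ b ∈ P, some a = some b → a = b :=
    fun a _ b _ h => Option.some_injective _ h
  have key := internal_piece_zero g hint (insert none (P.image some))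
      (fun o => Option.elim o d₀ dg) (fun o => Option.elim o (-w) v) ?_ ?_ d
  · rw [Finset.filter_insert] at key
    simp only [Option.elim_none, Option.elim_some] at key
    have himg : ∑ p ∈ Finset.filter
          (fun p => Option.elim p d₀ dg = d) (P.image some),
        Option.elim p (-w) v = ∑ p ∈ P.filter (fun p => dg p = d), v p := by
      rw [Finset.sum_filter, Finset.sum_image hinj]
      simp only [Option.elim_some]
      erw [← Finset.sum_filter]
    by_cases hd : d₀ = d
    · erw [if_pos hd] at key
      rw [Finset.sum_insert (by simp)] at key
      simp only [Option.elim_none] at key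
      rw [himg] at key
      simp only [if_pos hd]
      exact (neg_add_eq_zero.mp key).symm
    · erw [if_neg hd] at key
      rw [himg] at key
      simp only [if_neg hd]
      exact key
  · rintro (_|p) hp
    · exact neg_mem hw
    · simp only [Finset.mem_insert, Finset.mem_image, reduceCtorEq, false_or] at hp
      obtain ⟨q, hq, hqe⟩ := hp
      obtain rfl : q = p := Option.some_injective _ hqe
      simpa only [Option.elim_some] using hv q hq
  · rw [Finset.sum_insert (by simp),
      Finset.sum_image hinj]
    simp only [Option.elim_none, Option.elim_some]
    rw [heq]; abel

/-- Membership in `⋃_{γ'<γ} F_γ'` from membership in some lower piece. -/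
lemma mem_fstar_gen {F : Γ → Submodule K W} [Monoid Γ] [LinearOrder Γ]
    {d γ : Γ} (h : d < γ) {m : W} (hm : m ∈ F d) : m ∈ ⨆ γ' < γ, F γ' :=
  Submodule.mem_iSup_of_mem d (Submodule.mem_iSup_of_mem h hm)

/-- A nonzero element of `⋃_{γ'<γ} F_γ'` lies in some lower piece. -/
lemma fstar_cases_gen {F : Γ → Submodule K W} [Monoid Γ] [LinearOrder Γ]
    (hmono : Monotone F) {γ : Γ} {m : W}
    (h : m ∈ ⨆ γ' < γ, F γ') : m = 0 ∨ ∃ d, d < γ ∧ m ∈ F d := by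
  by_cases hm : m = 0
  · exact Or.inl hm
  right
  have hrw : (⨆ γ' < γ, F γ') = ⨆ p : {γ' // γ' < γ}, F ↑p := iSup_subtype'
  rw [hrw] at h
  rcases isEmpty_or_nonempty {γ' // γ' < γ} with he | hne
  · rw [iSup_of_empty] at h
    exact absurd ((Submodule.mem_bot K).mp h) hm
  · have hdir : Directed (· ≤ ·) (fun p : {γ' // γ' < γ} => F ↑p) := by
      intro p q
      rcases le_total (↑p : Γ) ↑q with hpq | hpq
      · exact ⟨q, hmono hpq, le_refl _⟩
      · exact ⟨p, le_refl _, hmono hpq⟩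
    obtain ⟨⟨d, hd⟩, hmem⟩ := (Submodule.mem_iSup_of_directed _ hdir).mp h
    exact ⟨d, hd, hmem⟩

end InternalHelpers

section FlatHelpers

/-- Flatness criterion with an arbitrary finite index type for the relation. -/
lemma flat_fintype {R : Type*} [Ring R] {X : Type*} [AddCommGroup X] [Module R X]
    (hf : IsFlatModule R X) {ι : Type*} [Fintype ι] (a : ι → R) (m : ι → X)
    (h : ∑ i, a i • m i = 0) :
    ∃ (k : ℕ) (b : ι → Fin k → R) (y : Fin k → X),
      (∀ i, m i = ∑ j, b i j • y j) ∧ ∀ j, (∑ i, a i * b i j) = 0 := by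
  classical
  let e := Fintype.equivFin ι
  obtain ⟨k, b, y, h1, h2⟩ := hf (Fintype.card ι) (fun p => a (e.symm p)) (fun p => m (e.symm p))
    (by rw [Equiv.sum_comp e.symm (fun i => a i • m i)]; exact h)
  refine ⟨k, fun i j => b (e i) j, y, fun i => by simpa using h1 (e i), fun j => ?_⟩
  have := h2 j
  rw [← Equiv.sum_comp e (fun p => a (e.symm p) * b p j)] at this
  simpa using this

/-- Trivial solution when every relation term is degenerate. -/
lemma base_sol {R : Type*} [Ring R] {X : Type*} [AddCommGroup X] [Module R X]
    {ι : Type*} [Fintype ι] (a : ι → R) (m : ι → X) (h : ∀ i, a i = 0 ∨ m i = 0) :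
    ∃ (k : ℕ) (b : ι → Fin k → R) (y : Fin k → X),
      (∀ i, m i = ∑ j, b i j • y j) ∧ ∀ j, (∑ i, a i * b i j) = 0 := by
  classical
  let e := Fintype.equivFin ι
  refine ⟨Fintype.card ι, fun i j => if i = e.symm j ∧ m i ≠ 0 then 1 else 0,
    fun j => m (e.symm j), ?_, ?_⟩
  · intro i
    rw [← Equiv.sum_comp e
      (fun j => (if i = e.symm j ∧ m i ≠ 0 then (1 : R) else 0) • m (e.symm j))]
    simp only [Equiv.symm_apply_apply]
    by_cases hm : m i = 0
    · simp [hm]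
    · rw [Finset.sum_eq_single i]
      · simp [hm]
      · intro b _ hb
        simp [Ne.symm hb]
      · intro hni
        exact absurd (Finset.mem_univ i) hni
  · intro j
    rw [Finset.sum_eq_single (e.symm j)]
    · rcases h (e.symm j) with h0 | h0 <;> simp [h0]
    · intro b _ hb
      simp [hb]
    · intro hni
      exact absurd (Finset.mem_univ _) hni

end FlatHelpers

section SigmaHelpers

universe u' v' w' x' y' z'

variable {K : Type u'} [Field K] {Γ : Type v'} [Monoid Γ] [LinearOrder Γ] [DecidableEq Γ]
variable {A : Type w'} [Ring A] [Algebra K A] {FA : AlgFiltration K Γ A}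
variable {B : Type x'} [Ring B] [Algebra K B]
variable {M : Type y'} [AddCommGroup M] [Module K M] [Module A M] [IsScalarTower K A M]
variable {FM : ModFiltration K Γ FA M}
variable {N : Type z'} [AddCommGroup N] [Module K N] [Module B N] [IsScalarTower K B N]

lemma sA_congr (GA : AssocGraded K Γ FA B) {γ₁ γ₂ : Γ} (h : γ₁ = γ₂) {a : A}
    (p : a ∈ FA.F γ₁) (q : a ∈ FA.F γ₂) : GA.σ γ₁ ⟨a, p⟩ = GA.σ γ₂ ⟨a, q⟩ := by
  subst h; rfl

lemma sA_sum (GA : AssocGraded K Γ FA B) {κ : Type*} (s : Finset κ) (f : κ → A) {γ : Γ}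
    (h : ∀ q, f q ∈ FA.F γ) (hs : (∑ q ∈ s, f q) ∈ FA.F γ) :
    GA.σ γ ⟨∑ q ∈ s, f q, hs⟩ = ∑ q ∈ s, GA.σ γ ⟨f q, h q⟩ := by
  have e : (⟨∑ q ∈ s, f q, hs⟩ : FA.F γ) = ∑ q ∈ s, (⟨f q, h q⟩ : FA.F γ) :=
    Subtype.ext (by rw [AddSubmonoidClass.coe_finset_sum])
  rw [e, map_sum]

lemma sA_lower (GA : AssocGraded K Γ FA B) {d γ : Γ} (h : d < γ) {a : A}
    (hd : a ∈ FA.F d) (hγ : a ∈ FA.F γ) : GA.σ γ ⟨a, hγ⟩ = 0 :=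
  (GA.σ_ker γ _).mpr (mem_fstar_gen h hd)

variable {GA : AssocGraded K Γ FA B}

lemma sM_congr (GrM : AssocGradedMod K Γ GA FM N) {γ₁ γ₂ : Γ} (h : γ₁ = γ₂) {m : M}
    (p : m ∈ FM.F γ₁) (q : m ∈ FM.F γ₂) : GrM.σ γ₁ ⟨m, p⟩ = GrM.σ γ₂ ⟨m, q⟩ := by
  subst h; rfl

lemma sM_congr' (GrM : AssocGradedMod K Γ GA FM N) {γ₁ γ₂ : Γ} (h : γ₁ = γ₂) {m₁ m₂ : M}
    (hv : m₁ = m₂) (p : m₁ ∈ FM.F γ₁) (q : m₂ ∈ FM.F γ₂) :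
    GrM.σ γ₁ ⟨m₁, p⟩ = GrM.σ γ₂ ⟨m₂, q⟩ := by
  subst h; subst hv; rfl

lemma sM_sum (GrM : AssocGradedMod K Γ GA FM N) {κ : Type*} (s : Finset κ) (f : κ → M) {γ : Γ}
    (h : ∀ q, f q ∈ FM.F γ) (hs : (∑ q ∈ s, f q) ∈ FM.F γ) :
    GrM.σ γ ⟨∑ q ∈ s, f q, hs⟩ = ∑ q ∈ s, GrM.σ γ ⟨f q, h q⟩ := by
  have e : (⟨∑ q ∈ s, f q, hs⟩ : FM.F γ) = ∑ q ∈ s, (⟨f q, h q⟩ : FM.F γ) :=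
    Subtype.ext (by rw [AddSubmonoidClass.coe_finset_sum])
  rw [e, map_sum]

lemma sM_lower (GrM : AssocGradedMod K Γ GA FM N) {d γ : Γ} (h : d < γ) {m : M}
    (hd : m ∈ FM.F d) (hγ : m ∈ FM.F γ) : GrM.σ γ ⟨m, hγ⟩ = 0 :=
  (GrM.σ_ker γ _).mpr (mem_fstar_gen h hd)

end SigmaHelpers

section KeyLemma

variable {K : Type u} [Field K] {Γ : Type v} [Monoid Γ] [LinearOrder Γ] [DecidableEq Γ]
variable [CovariantClass Γ Γ (· * ·) (· < ·)] [CovariantClass Γ Γ (swap (· * ·)) (· < ·)]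
variable [WellFoundedLT Γ]
variable {A : Type w} [Ring A] [Algebra K A] {FA : AlgFiltration K Γ A}
variable {B : Type x} [Ring B] [Algebra K B] {GA : AssocGraded K Γ FA B}
variable {M : Type y} [AddCommGroup M] [Module K M] [Module A M] [IsScalarTower K A M]
variable {FM : ModFiltration K Γ FA M}
variable {N : Type z} [AddCommGroup N] [Module K N] [Module B N] [IsScalarTower K B N]

lemma key_lift (GrM : AssocGradedMod K Γ GA FM N) (flat : IsFlatModule B N) (τ : Γ) :
    ∀ (ι : Type v) [Fintype ι] (a : ι → A) (m : ι → M) (γd δd : ι → Γ),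
      (∀ i, a i ∈ FA.F (γd i)) → (∀ i, m i ∈ FM.F (δd i)) →
      (∀ i, a i ≠ 0 → m i ≠ 0 → γd i * δd i ≤ τ) →
      (∑ i, a i • m i) = 0 →
      ∃ (k : ℕ) (b : ι → Fin k → A) (y : Fin k → M),
        (∀ i, m i = ∑ j, b i j • y j) ∧ (∀ j, (∑ i, a i * b i j) = 0) := by
  induction τ using WellFoundedLT.induction with
  | _ τ IH =>
  intro ι _ a m γd δd ha hm hbound hrel
  classical
  by_cases hz : ∀ i, a i = 0 ∨ m i = 0
  · exact base_sol a m hz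
  set S : Finset ι :=
    Finset.univ.filter (fun i => a i ≠ 0 ∧ m i ≠ 0 ∧ γd i * δd i = τ) with hSdef
  have hSmem : ∀ i ∈ S, a i ≠ 0 ∧ m i ≠ 0 ∧ γd i * δd i = τ :=
    fun i hi => (Finset.mem_filter.mp hi).2
  by_cases hS : S.Nonempty
  case neg =>
    push_neg at hz
    obtain ⟨i₀, hi₀a, hi₀m⟩ := hz
    have hNZne : (Finset.univ.filter (fun i => a i ≠ 0 ∧ m i ≠ 0)).Nonempty :=
      ⟨i₀, Finset.mem_filter.mpr ⟨Finset.mem_univ _, hi₀a, hi₀m⟩⟩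
    refine IH (((Finset.univ.filter (fun i => a i ≠ 0 ∧ m i ≠ 0)).image
        (fun i => γd i * δd i)).max' (hNZne.image _)) ?_ ι a m γd δd ha hm ?_ hrel
    · rw [Finset.max'_lt_iff]
      intro b hb
      obtain ⟨i, hi, rfl⟩ := Finset.mem_image.mp hb
      obtain ⟨hia, him⟩ := (Finset.mem_filter.mp hi).2
      refine lt_of_le_of_ne (hbound i hia him) (fun he => ?_)
      exact hS ⟨i, Finset.mem_filter.mpr ⟨Finset.mem_univ _, hia, him, he⟩⟩
    · intro i hia him
      have hmem : i ∈ Finset.univ.filter (fun i => a i ≠ 0 ∧ m i ≠ 0) :=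
        Finset.mem_filter.mpr ⟨Finset.mem_univ _, hia, him⟩
      exact Finset.le_max'
        ((Finset.univ.filter (fun i => a i ≠ 0 ∧ m i ≠ 0)).image (fun i => γd i * δd i)) _
        (Finset.mem_image.mpr ⟨i, hmem, rfl⟩)
  case pos =>
  -- principal symbols
  obtain ⟨α, hαdef⟩ : ∃ f : ι → B, f = fun i => GA.σ (γd i) ⟨a i, ha i⟩ := ⟨_, rfl⟩
  obtain ⟨ν, hνdef⟩ : ∃ f : ι → N, f = fun i => GrM.σ (δd i) ⟨m i, hm i⟩ := ⟨_, rfl⟩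
  -- the graded relation among the top-degree terms
  have hamS : ∀ p : {i // i ∈ S}, a ↑p • m ↑p ∈ FM.F τ := fun p => by
    have h1 := FM.smul_mem (ha ↑p) (hm ↑p)
    rwa [(hSmem ↑p p.2).2.2] at h1
  have hgr : ∑ p : {i // i ∈ S}, α ↑p • ν ↑p = 0 := by
    have h1 : ∀ p : {i // i ∈ S}, α ↑p • ν ↑p = GrM.σ τ ⟨a ↑p • m ↑p, hamS p⟩ := fun p => by
      rw [hαdef, hνdef]
      rw [GrM.σ_smul]
      exact sM_congr GrM (hSmem ↑p p.2).2.2 _ _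
    rw [Finset.sum_congr rfl (fun p _ => h1 p)]
    rw [← sM_sum GrM Finset.univ (fun p : {i // i ∈ S} => a ↑p • m ↑p) hamS
      (sum_mem (fun p _ => hamS p))]
    rw [GrM.σ_ker]
    have hsplit : ∑ p : {i // i ∈ S}, a ↑p • m ↑p = - ∑ i ∈ Sᶜ, a i • m i := by
      have h2 : ∑ i ∈ S, a i • m i + ∑ i ∈ Sᶜ, a i • m i = 0 := by
        rw [Finset.sum_add_sum_compl]
        exact hrel
      rw [Finset.sum_coe_sort S (fun i => a i • m i)]
      exact eq_neg_of_add_eq_zero_left h2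
    show ∑ p : {i // i ∈ S}, a ↑p • m ↑p ∈ FM.Fstar τ
    rw [hsplit]
    apply neg_mem
    apply sum_mem
    intro i hic
    by_cases hai : a i = 0
    · rw [hai, zero_smul]; exact zero_mem _
    by_cases hmi : m i = 0
    · rw [hmi, smul_zero]; exact zero_mem _
    have hlt : γd i * δd i < τ := by
      refine lt_of_le_of_ne (hbound i hai hmi) (fun he => ?_)
      exact (Finset.mem_compl.mp hic) (Finset.mem_filter.mpr ⟨Finset.mem_univ _, hai, hmi, he⟩)
    exact mem_fstar_gen hlt (FM.smul_mem (ha i) (hm i))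
  -- apply flatness of the graded module
  obtain ⟨k, bh, yh, hy1, hb1⟩ := flat_fintype flat
    (fun p : {i // i ∈ S} => α ↑p) (fun p => ν ↑p) hgr
  -- decompose the graded data into homogeneous components
  choose fy hfy1 hfy2 using fun j => internal_decomp GrM.grade GrM.internal (yh j)
  choose fb hfb1 hfb2 using fun (p : {i // i ∈ S}) (j : Fin k) =>
    internal_decomp GA.grade GA.internal (bh p j)
  -- lifts of the homogeneous components
  choose yt hyt using fun (j : Fin k) (η : Γ) => GrM.σ_surj η (fy j η) (hfy1 j η)
  choose bt hbt using fun (p : {i // i ∈ S}) (j : Fin k) (ε : Γ) =>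
    GA.σ_surj ε (fb p j ε) (hfb1 p j ε)
  -- supporting degree sets
  set D : Finset Γ := Finset.univ.biUnion (fun j : Fin k => (fy j).support) with hDdef
  set E : Finset Γ :=
    Finset.univ.biUnion (fun q : {i // i ∈ S} × Fin k => (fb q.1 q.2).support) with hEdef
  have hyD : ∀ j, yh j = ∑ η ∈ D, fy j η := fun j => by
    have hsub : (fy j).support ⊆ D :=
      fun η hη => Finset.mem_biUnion.mpr ⟨j, Finset.mem_univ _, hη⟩
    rw [← hfy2 j, Finsupp.sum]
    exact Finset.sum_subset hsub (fun η _ hη => Finsupp.notMem_support_iff.mp hη)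
  have hbE : ∀ p j, bh p j = ∑ ε ∈ E, fb p j ε := fun p j => by
    have hsub : (fb p j).support ⊆ E :=
      fun ε hε => Finset.mem_biUnion.mpr ⟨(p, j), Finset.mem_univ _, hε⟩
    rw [← hfb2 p j, Finsupp.sum]
    exact Finset.sum_subset hsub (fun ε _ hε => Finsupp.notMem_support_iff.mp hε)
  -- the lifted coefficients
  obtain ⟨bA, hbAdef⟩ : ∃ f : ι → Fin k → Γ → A, f = fun i j η =>
      if h : i ∈ S then
        ∑ ε ∈ E.filter (fun ε => γd i * ε * η = τ), ((bt ⟨i, h⟩ j ε : A)) else 0 := ⟨_, rfl⟩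
  have hbAS : ∀ (i) (h : i ∈ S) (j : Fin k) (η : Γ), bA i j η =
      ∑ ε ∈ E.filter (fun ε => γd i * ε * η = τ), ((bt ⟨i, h⟩ j ε : A)) := by
    intro i h j η
    rw [hbAdef]
    exact dif_pos h
  have hbA0 : ∀ i ∉ S, ∀ (j : Fin k) (η : Γ), bA i j η = 0 := by
    intro i h j η
    rw [hbAdef]
    exact dif_neg h
  -- the lifted generators
  obtain ⟨yM, hyMdef⟩ : ∃ f : Fin k → Γ → M, f = fun j η => ((yt j η : M)) := ⟨_, rfl⟩
  have hyMF : ∀ (j : Fin k) (η : Γ), yM j η ∈ FM.F η := fun j η => by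
    rw [hyMdef]; exact (yt j η).2
  -- the corrected module elements and the new coefficients
  obtain ⟨x, hxdef⟩ : ∃ f : ι → M, f = fun i =>
      m i - ∑ p : Fin k × {η // η ∈ D}, bA i p.1 ↑p.2 • yM p.1 ↑p.2 := ⟨_, rfl⟩
  obtain ⟨c, hcdef⟩ : ∃ f : Fin k → Γ → A, f = fun j η => ∑ i : ι, a i * bA i j η := ⟨_, rfl⟩
  -- the three key properties
  have P1 : ∀ (i) (_ : i ∈ S), ∃ δ', x i ∈ FM.F δ' ∧ (x i ≠ 0 → γd i * δ' < τ) := by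
    intro i hiS
    set TK : Finset (Fin k × Γ × Γ) :=
      ((Finset.univ : Finset (Fin k)) ×ˢ D ×ˢ E).filter
        (fun q => γd i * q.2.2 * q.2.1 = τ) with hTK
    -- the triple-sum expression of `x i`
    have hxe : x i = m i - ∑ q ∈ TK, (bt ⟨i, hiS⟩ q.1 q.2.2 : A) • yM q.1 q.2.1 := by
      rw [hxdef]
      simp only
      congr 1
      rw [Fintype.sum_prod_type]
      have hj : ∀ j : Fin k, ∑ ηs : {η // η ∈ D}, bA i j ↑ηs • yM j ↑ηs
          = ∑ η ∈ D, ∑ ε ∈ E, (if γd i * ε * η = τ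
              then (bt ⟨i, hiS⟩ j ε : A) • yM j η else 0) := fun j => by
        rw [Finset.sum_coe_sort D (fun η => bA i j η • yM j η)]
        refine Finset.sum_congr rfl (fun η _ => ?_)
        rw [hbAS i hiS j η, Finset.sum_smul, Finset.sum_filter]
      rw [Finset.sum_congr rfl (fun j (_ : j ∈ Finset.univ) => hj j)]
      have hpack : ∑ q ∈ TK, (bt ⟨i, hiS⟩ q.1 q.2.2 : A) • yM q.1 q.2.1
          = ∑ j : Fin k, ∑ η ∈ D, ∑ ε ∈ E, (if γd i * ε * η = τ
              then (bt ⟨i, hiS⟩ j ε : A) • yM j η else 0) := by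
        rw [hTK, Finset.sum_filter, Finset.sum_product]
        refine Finset.sum_congr rfl (fun j _ => ?_)
        rw [Finset.sum_product]
      rw [hpack]
    -- the top degree of the pieces
    set degs : Finset Γ := insert (δd i) (TK.image (fun q => q.2.2 * q.2.1)) with hdegs
    have hdne : degs.Nonempty := ⟨δd i, Finset.mem_insert_self _ _⟩
    set μ := degs.max' hdne with hμ
    have hδμ : δd i ≤ μ := by
      rw [hμ]
      exact Finset.le_max' degs _ (Finset.mem_insert_self _ _)
    have hqμ : ∀ q ∈ TK, q.2.2 * q.2.1 ≤ μ := fun q hq => by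
      rw [hμ]
      exact Finset.le_max' degs _
        (Finset.mem_insert_of_mem (Finset.mem_image.mpr ⟨q, hq, rfl⟩))
    have hγμ : γd i * μ = τ := by
      have hmm : μ ∈ degs := by rw [hμ]; exact Finset.max'_mem degs hdne
      rw [hdegs] at hmm
      rcases Finset.mem_insert.mp hmm with he | hin
      · rw [he]
        exact (hSmem i hiS).2.2
      · obtain ⟨q, hq, he⟩ := Finset.mem_image.mp hin
        rw [← he, ← mul_assoc]
        exact (Finset.mem_filter.mp hq).2
    -- memberships
    have hmμ : m i ∈ FM.F μ := FM.mono hδμ (hm i)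
    have hpF : ∀ q : {q // q ∈ TK},
        (bt ⟨i, hiS⟩ q.1.1 q.1.2.2 : A) • yM q.1.1 q.1.2.1 ∈ FM.F (q.1.2.2 * q.1.2.1) :=
      fun q => FM.smul_mem (bt _ _ _).2 (hyMF _ _)
    have hpμ : ∀ q : {q // q ∈ TK},
        (bt ⟨i, hiS⟩ q.1.1 q.1.2.2 : A) • yM q.1.1 q.1.2.1 ∈ FM.F μ :=
      fun q => FM.mono (hqμ q.1 q.2) (hpF q)
    have hsumμ : ∑ q : {q // q ∈ TK},
        (bt ⟨i, hiS⟩ q.1.1 q.1.2.2 : A) • yM q.1.1 q.1.2.1 ∈ FM.F μ :=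
      sum_mem (fun q _ => hpμ q)
    have hxe2 : x i = m i - ∑ q : {q // q ∈ TK},
        (bt ⟨i, hiS⟩ q.1.1 q.1.2.2 : A) • yM q.1.1 q.1.2.1 := by
      rw [hxe, ← Finset.sum_attach TK (fun q => (bt ⟨i, hiS⟩ q.1 q.2.2 : A) • yM q.1 q.2.1),
        Finset.univ_eq_attach]
    have hxμ : x i ∈ FM.F μ := by
      rw [hxe2]
      exact sub_mem hmμ hsumμ
    -- the symbol of `x i` in degree μ vanishes
    have hσx : GrM.σ μ ⟨x i, hxμ⟩ = 0 := by
      have hxS : (⟨x i, hxμ⟩ : FM.F μ) = ⟨m i, hmμ⟩ - ⟨∑ q : {q // q ∈ TK},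
          (bt ⟨i, hiS⟩ q.1.1 q.1.2.2 : A) • yM q.1.1 q.1.2.1, hsumμ⟩ := by
        apply Subtype.ext
        rw [AddSubgroupClass.coe_sub]
        exact hxe2
      rw [hxS, map_sub, sM_sum GrM Finset.univ _ hpμ]
      have em : GrM.σ μ ⟨m i, hmμ⟩ = if δd i = μ then ν i else 0 := by
        by_cases hd : δd i = μ
        · rw [if_pos hd, hνdef]
          simp only
          exact (sM_congr GrM hd _ _).symm
        · rw [if_neg hd]
          exact sM_lower GrM (lt_of_le_of_ne hδμ hd) (hm i) _
      have ep : ∀ q : {q // q ∈ TK},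
          GrM.σ μ ⟨(bt ⟨i, hiS⟩ q.1.1 q.1.2.2 : A) • yM q.1.1 q.1.2.1, hpμ q⟩
          = if q.1.2.2 * q.1.2.1 = μ
            then fb ⟨i, hiS⟩ q.1.1 q.1.2.2 • fy q.1.1 q.1.2.1 else 0 := by
        intro q
        by_cases hd : q.1.2.2 * q.1.2.1 = μ
        · rw [if_pos hd, ← hbt ⟨i, hiS⟩ q.1.1 q.1.2.2, ← hyt q.1.1 q.1.2.1, GrM.σ_smul]
          exact (sM_congr' GrM hd (by rw [hyMdef]) _ _).symm
        · rw [if_neg hd]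
          exact sM_lower GrM (lt_of_le_of_ne (hqμ q.1 q.2) hd) (hpF q) _
      rw [em, Finset.sum_congr rfl (fun q (_ : q ∈ Finset.univ) => ep q), Finset.univ_eq_attach,
        Finset.sum_attach TK (fun q => if q.2.2 * q.2.1 = μ
          then fb ⟨i, hiS⟩ q.1 q.2.2 • fy q.1 q.2.1 else 0),
        ← Finset.sum_filter]
      -- the homogeneous-component identity coming from the graded relation
      have hexp : ∑ q ∈ ((Finset.univ : Finset (Fin k)) ×ˢ D ×ˢ E),
          fb ⟨i, hiS⟩ q.1 q.2.2 • fy q.1 q.2.1 = ν i := by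
        rw [Finset.sum_product]
        have hj2 : ∀ j : Fin k, ∑ b ∈ D ×ˢ E, fb ⟨i, hiS⟩ j b.2 • fy j b.1
            = bh ⟨i, hiS⟩ j • yh j := fun j => by
          rw [Finset.sum_product]
          have hin : ∀ η ∈ D, ∑ ε ∈ E, fb ⟨i, hiS⟩ j ε • fy j η
              = bh ⟨i, hiS⟩ j • fy j η := fun η _ => by
            rw [← Finset.sum_smul, ← hbE]
          rw [Finset.sum_congr rfl hin, ← Finset.smul_sum, ← hyD]
        rw [Finset.sum_congr rfl (fun j (_ : j ∈ Finset.univ) => hj2 j)]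
        exact (hy1 ⟨i, hiS⟩).symm
      have hhom : ∀ q ∈ ((Finset.univ : Finset (Fin k)) ×ˢ D ×ˢ E),
          fb ⟨i, hiS⟩ q.1 q.2.2 • fy q.1 q.2.1 ∈ GrM.grade (q.2.2 * q.2.1) := by
        intro q _
        rw [← hbt ⟨i, hiS⟩ q.1 q.2.2, ← hyt q.1 q.2.1, GrM.σ_smul]
        exact GrM.σ_mem _ _
      have hps := internal_piece_single GrM.grade GrM.internal
        ((Finset.univ : Finset (Fin k)) ×ˢ D ×ˢ E)
        (fun q => q.2.2 * q.2.1) (fun q => fb ⟨i, hiS⟩ q.1 q.2.2 • fy q.1 q.2.1)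
        hhom (by rw [hνdef]; simp only; exact GrM.σ_mem _ _) hexp μ
      have hfe : TK.filter (fun q => q.2.2 * q.2.1 = μ)
          = ((Finset.univ : Finset (Fin k)) ×ˢ D ×ˢ E).filter
            (fun q => q.2.2 * q.2.1 = μ) := by
        rw [hTK, Finset.filter_filter]
        refine Finset.filter_congr (fun q _ => ?_)
        constructor
        · exact fun h => h.2
        · exact fun h => ⟨by rw [mul_assoc, h, hγμ], h⟩
      rw [hfe, hps, sub_self]
    -- conclude
    have hxstar : x i ∈ FM.Fstar μ := (GrM.σ_ker μ _).mp hσx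
    rcases fstar_cases_gen FM.mono hxstar with h0 | ⟨d, hdμ, hdm⟩
    · exact ⟨1, by rw [h0]; exact zero_mem _, fun hx0 => absurd h0 hx0⟩
    · refine ⟨d, hdm, fun _ => ?_⟩
      calc γd i * d < γd i * μ := mul_lt_mul_right hdμ _
        _ = τ := hγμ
  have P2 : ∀ (j : Fin k) (η : Γ), η ∈ D → ∃ θ', c j η ∈ FA.F θ' ∧ (c j η ≠ 0 → θ' * η < τ) := by
    intro j η _
    by_cases hc0 : c j η = 0
    · exact ⟨1, by rw [hc0]; exact zero_mem _, fun h => absurd hc0 h⟩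
    set TK2 : Finset ({i // i ∈ S} × Γ) :=
      ((Finset.univ : Finset {i // i ∈ S}) ×ˢ E).filter
        (fun q => γd ↑q.1 * q.2 * η = τ) with hTK2
    have hce : c j η = ∑ q ∈ TK2, a ↑q.1 * (bt q.1 j q.2 : A) := by
      rw [hcdef]
      simp only
      have hstep1 : ∑ i : ι, a i * bA i j η = ∑ i ∈ S, a i * bA i j η :=
        (Finset.sum_subset (Finset.subset_univ S)
          (fun i _ hi => by rw [hbA0 i hi, mul_zero])).symm
      rw [hstep1, ← Finset.sum_coe_sort S (fun i => a i * bA i j η)]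
      have hstep2 : ∀ p : {i // i ∈ S}, a ↑p * bA ↑p j η
          = ∑ ε ∈ E.filter (fun ε => γd ↑p * ε * η = τ), a ↑p * (bt p j ε : A) := fun p => by
        rw [hbAS ↑p p.2 j η, Finset.mul_sum]
      rw [Finset.sum_congr rfl (fun p (_ : p ∈ Finset.univ) => hstep2 p)]
      have hstep3 : ∑ q ∈ TK2, a ↑q.1 * (bt q.1 j q.2 : A)
          = ∑ p : {i // i ∈ S}, ∑ ε ∈ E.filter (fun ε => γd ↑p * ε * η = τ),
              a ↑p * (bt p j ε : A) := by
        rw [hTK2, Finset.sum_filter, Finset.sum_product]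
        exact Finset.sum_congr rfl (fun p _ => by rw [Finset.sum_filter])
      rw [hstep3]
    have hTK2ne : TK2.Nonempty := by
      by_contra hne
      apply hc0
      rw [hce, Finset.not_nonempty_iff_eq_empty.mp hne, Finset.sum_empty]
    set θ := (TK2.image (fun q => γd ↑q.1 * q.2)).max' (hTK2ne.image _) with hθ
    have hθη : θ * η = τ := by
      obtain ⟨q, hq, he⟩ := Finset.mem_image.mp
        (Finset.max'_mem (TK2.image (fun q => γd ↑q.1 * q.2)) (hTK2ne.image _))
      rw [hθ, ← he]
      exact (Finset.mem_filter.mp hq).2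
    have hqθ : ∀ q ∈ TK2, γd ↑q.1 * q.2 ≤ θ := fun q hq => by
      rw [hθ]
      exact Finset.le_max' (TK2.image (fun q => γd ↑q.1 * q.2)) _
        (Finset.mem_image.mpr ⟨q, hq, rfl⟩)
    have hterm : ∀ q : {q // q ∈ TK2},
        a ↑q.1.1 * (bt q.1.1 j q.1.2 : A) ∈ FA.F (γd ↑q.1.1 * q.1.2) :=
      fun q => FA.mul_mem (ha _) (bt _ _ _).2
    have htermθ : ∀ q : {q // q ∈ TK2}, a ↑q.1.1 * (bt q.1.1 j q.1.2 : A) ∈ FA.F θ :=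
      fun q => FA.mono (hqθ q.1 q.2) (hterm q)
    have hce2 : c j η = ∑ q : {q // q ∈ TK2}, a ↑q.1.1 * (bt q.1.1 j q.1.2 : A) := by
      rw [hce, ← Finset.sum_attach TK2 (fun q => a ↑q.1 * (bt q.1 j q.2 : A)),
        Finset.univ_eq_attach]
    have hcF : c j η ∈ FA.F θ := by
      rw [hce2]
      exact sum_mem (fun q _ => htermθ q)
    have hσc : GA.σ θ ⟨c j η, hcF⟩ = 0 := by
      have hceS : (⟨c j η, hcF⟩ : FA.F θ) = ⟨∑ q : {q // q ∈ TK2},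
          a ↑q.1.1 * (bt q.1.1 j q.1.2 : A),
          sum_mem (fun q _ => htermθ q)⟩ := Subtype.ext hce2
      rw [hceS, sA_sum GA Finset.univ _ htermθ]
      have ep : ∀ q : {q // q ∈ TK2},
          GA.σ θ ⟨a ↑q.1.1 * (bt q.1.1 j q.1.2 : A), htermθ q⟩
          = if γd ↑q.1.1 * q.1.2 = θ then α ↑q.1.1 * fb q.1.1 j q.1.2 else 0 := by
        intro q
        by_cases hd : γd ↑q.1.1 * q.1.2 = θ
        · rw [if_pos hd, hαdef]
          simp only
          rw [← hbt q.1.1 j q.1.2, GA.σ_mul]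
          exact (sA_congr GA hd _ _).symm
        · rw [if_neg hd]
          exact sA_lower GA (lt_of_le_of_ne (hqθ q.1 q.2) hd) (hterm q) _
      rw [Finset.sum_congr rfl (fun q (_ : q ∈ Finset.univ) => ep q), Finset.univ_eq_attach,
        Finset.sum_attach TK2
          (fun q => if γd ↑q.1 * q.2 = θ then α ↑q.1 * fb q.1 j q.2 else 0),
        ← Finset.sum_filter]
      have hexp : ∑ q ∈ ((Finset.univ : Finset {i // i ∈ S}) ×ˢ E),
          α ↑q.1 * fb q.1 j q.2 = 0 := by
        rw [Finset.sum_product]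
        have hin : ∀ p : {i // i ∈ S}, ∑ ε ∈ E, α ↑p * fb p j ε = α ↑p * bh p j := fun p => by
          rw [← Finset.mul_sum, ← hbE]
        rw [Finset.sum_congr rfl (fun p (_ : p ∈ Finset.univ) => hin p)]
        exact hb1 j
      have hhom : ∀ q ∈ ((Finset.univ : Finset {i // i ∈ S}) ×ˢ E),
          α ↑q.1 * fb q.1 j q.2 ∈ GA.grade (γd ↑q.1 * q.2) := by
        intro q _
        rw [hαdef]
        simp only
        rw [← hbt q.1 j q.2, GA.σ_mul]
        exact GA.σ_mem _ _
      have hpz := internal_piece_zero GA.grade GA.internal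
        ((Finset.univ : Finset {i // i ∈ S}) ×ˢ E)
        (fun q => γd ↑q.1 * q.2) (fun q => α ↑q.1 * fb q.1 j q.2) hhom hexp θ
      have hfe : TK2.filter (fun q => γd ↑q.1 * q.2 = θ)
          = ((Finset.univ : Finset {i // i ∈ S}) ×ˢ E).filter
            (fun q => γd ↑q.1 * q.2 = θ) := by
        rw [hTK2, Finset.filter_filter]
        refine Finset.filter_congr (fun q _ => ?_)
        constructor
        · exact fun h => h.2
        · exact fun h => ⟨by rw [h, hθη], h⟩
      rw [hfe]
      exact hpz
    have hcstar : c j η ∈ FA.Fstar θ := (GA.σ_ker θ _).mp hσc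
    rcases fstar_cases_gen FA.mono hcstar with h0 | ⟨d, hdθ, hdm⟩
    · exact absurd h0 hc0
    · refine ⟨d, hdm, fun _ => ?_⟩
      calc d * η < θ * η := mul_lt_mul_left hdθ η
        _ = τ := hθη
  have P3 : ∑ i : ι, a i • x i
      + ∑ p : Fin k × {η // η ∈ D}, c p.1 ↑p.2 • yM p.1 ↑p.2 = 0 := by
    have h1 : ∀ i, a i • x i = a i • m i
        - ∑ p : Fin k × {η // η ∈ D}, (a i * bA i p.1 ↑p.2) • yM p.1 ↑p.2 := fun i => by
      rw [hxdef]
      simp only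
      rw [smul_sub, Finset.smul_sum]
      simp_rw [smul_smul]
    have h2 : ∀ p : Fin k × {η // η ∈ D}, c p.1 ↑p.2 • yM p.1 ↑p.2
        = ∑ i : ι, (a i * bA i p.1 ↑p.2) • yM p.1 ↑p.2 := fun p => by
      rw [hcdef]
      simp only
      rw [Finset.sum_smul]
    rw [Finset.sum_congr rfl (fun i (_ : i ∈ Finset.univ) => h1 i),
      Finset.sum_congr rfl (fun (p : Fin k × {η // η ∈ D}) (_ : p ∈ Finset.univ) => h2 p),
      Finset.sum_sub_distrib, hrel, zero_sub, Finset.sum_comm]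
    exact neg_add_cancel _
  -- assemble degree data for the new relation
  have P1' : ∀ i, ∃ δ', x i ∈ FM.F δ' ∧ (a i ≠ 0 → x i ≠ 0 → γd i * δ' < τ) := by
    intro i
    by_cases hi : i ∈ S
    · obtain ⟨δ', hh1, hh2⟩ := P1 i hi
      exact ⟨δ', hh1, fun _ => hh2⟩
    · refine ⟨δd i, ?_, ?_⟩
      · have : x i = m i := by
          rw [hxdef]
          simp only
          rw [Finset.sum_eq_zero (fun p _ => by rw [hbA0 i hi, zero_smul]), sub_zero]
        rw [this]; exact hm i
      · intro hai hxi
        have hmi : m i ≠ 0 := by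
          intro h0
          apply hxi
          rw [hxdef]
          simp only
          rw [Finset.sum_eq_zero (fun p _ => by rw [hbA0 i hi, zero_smul]), sub_zero, h0]
        exact lt_of_le_of_ne (hbound i hai hmi)
          (fun he => hi (Finset.mem_filter.mpr ⟨Finset.mem_univ _, hai, hmi, he⟩))
  choose δf hδf1 hδf2 using P1'
  choose θf hθf1 hθf2 using fun (p : Fin k × {η // η ∈ D}) => P2 p.1 ↑p.2 p.2.2
  -- the new relation
  have ha' : ∀ i' : ι ⊕ (Fin k × {η // η ∈ D}),
      Sum.elim a (fun p : Fin k × {η // η ∈ D} => c p.1 ↑p.2) i' ∈ FA.F (Sum.elim γd θf i') := by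
    rintro (i | p)
    · exact ha i
    · exact hθf1 p
  have hm' : ∀ i' : ι ⊕ (Fin k × {η // η ∈ D}),
      Sum.elim x (fun p : Fin k × {η // η ∈ D} => yM p.1 ↑p.2) i' ∈ FM.F (Sum.elim δf (fun p : Fin k × {η // η ∈ D} => (↑p.2 : Γ)) i') := by
    rintro (i | p)
    · exact hδf1 i
    · exact hyMF p.1 ↑p.2
  have hlt' : ∀ i' : ι ⊕ (Fin k × {η // η ∈ D}),
      Sum.elim a (fun p : Fin k × {η // η ∈ D} => c p.1 ↑p.2) i' ≠ 0 →
      Sum.elim x (fun p : Fin k × {η // η ∈ D} => yM p.1 ↑p.2) i' ≠ 0 →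
      Sum.elim γd θf i' * Sum.elim δf (fun p : Fin k × {η // η ∈ D} => (↑p.2 : Γ)) i' < τ := by
    rintro (i | p) hh1 hh2
    · exact hδf2 i hh1 hh2
    · exact hθf2 p hh1
  have hrel' : ∑ i' : ι ⊕ (Fin k × {η // η ∈ D}),
      Sum.elim a (fun p : Fin k × {η // η ∈ D} => c p.1 ↑p.2) i' • Sum.elim x (fun p : Fin k × {η // η ∈ D} => yM p.1 ↑p.2) i' = 0 := by
    rw [Fintype.sum_sum_type]
    simpa only [Sum.elim_inl, Sum.elim_inr] using P3
  -- solve the new relation (it has strictly smaller top degree)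
  have hsol : ∃ (k' : ℕ) (d : ι ⊕ (Fin k × {η // η ∈ D}) → Fin k' → A) (z : Fin k' → M),
      (∀ i', Sum.elim x (fun p : Fin k × {η // η ∈ D} => yM p.1 ↑p.2) i' = ∑ l, d i' l • z l) ∧
      (∀ l, (∑ i', Sum.elim a (fun p : Fin k × {η // η ∈ D} => c p.1 ↑p.2) i' * d i' l) = 0) := by
    by_cases hz' : ∀ i', Sum.elim a (fun p : Fin k × {η // η ∈ D} => c p.1 ↑p.2) i' = 0 ∨
        Sum.elim x (fun p : Fin k × {η // η ∈ D} => yM p.1 ↑p.2) i' = 0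
    · exact base_sol _ _ hz'
    · push_neg at hz'
      obtain ⟨i₀, hi₀a, hi₀m⟩ := hz'
      have hNZne : (Finset.univ.filter (fun i' : ι ⊕ (Fin k × {η // η ∈ D}) =>
          Sum.elim a (fun p : Fin k × {η // η ∈ D} => c p.1 ↑p.2) i' ≠ 0 ∧
          Sum.elim x (fun p : Fin k × {η // η ∈ D} => yM p.1 ↑p.2) i' ≠ 0)).Nonempty :=
        ⟨i₀, Finset.mem_filter.mpr ⟨Finset.mem_univ _, hi₀a, hi₀m⟩⟩
      refine IH (((Finset.univ.filter (fun i' : ι ⊕ (Fin k × {η // η ∈ D}) =>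
          Sum.elim a (fun p : Fin k × {η // η ∈ D} => c p.1 ↑p.2) i' ≠ 0 ∧
          Sum.elim x (fun p : Fin k × {η // η ∈ D} => yM p.1 ↑p.2) i' ≠ 0)).image
          (fun i' => Sum.elim γd θf i' * Sum.elim δf (fun p : Fin k × {η // η ∈ D} => (↑p.2 : Γ)) i')).max'
          (hNZne.image _)) ?_ _ _ _ _ _ ha' hm' ?_ hrel'
      · rw [Finset.max'_lt_iff]
        intro b hb
        obtain ⟨i', hi', rfl⟩ := Finset.mem_image.mp hb
        obtain ⟨hia, him⟩ := (Finset.mem_filter.mp hi').2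
        exact hlt' i' hia him
      · intro i' hia him
        have hmem : i' ∈ Finset.univ.filter (fun i' : ι ⊕ (Fin k × {η // η ∈ D}) =>
            Sum.elim a (fun p : Fin k × {η // η ∈ D} => c p.1 ↑p.2) i' ≠ 0 ∧
            Sum.elim x (fun p : Fin k × {η // η ∈ D} => yM p.1 ↑p.2) i' ≠ 0) :=
          Finset.mem_filter.mpr ⟨Finset.mem_univ _, hia, him⟩
        apply Finset.le_max'
        exact Finset.mem_image.mpr ⟨i', hmem, rfl⟩
  obtain ⟨k', dm, z, hz1, hz2⟩ := hsol
  refine ⟨k', fun i l => dm (Sum.inl i) l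
    + ∑ p : Fin k × {η // η ∈ D}, bA i p.1 ↑p.2 * dm (Sum.inr p) l, z, ?_, ?_⟩
  · intro i
    have hxi : x i = ∑ l, dm (Sum.inl i) l • z l := hz1 (Sum.inl i)
    have hyp : ∀ p : Fin k × {η // η ∈ D}, yM p.1 ↑p.2 = ∑ l, dm (Sum.inr p) l • z l :=
      fun p => hz1 (Sum.inr p)
    have hmx : m i = x i + ∑ p : Fin k × {η // η ∈ D}, bA i p.1 ↑p.2 • yM p.1 ↑p.2 := by
      rw [hxdef]
      simp only
      rw [sub_add_cancel]
    rw [hmx, hxi, Finset.sum_congr rfl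
      (fun (p : Fin k × {η // η ∈ D}) (_ : p ∈ Finset.univ) => by rw [hyp p])]
    simp only [Finset.smul_sum, smul_smul, add_smul, Finset.sum_smul, Finset.sum_add_distrib]
    congr 1
    rw [Finset.sum_comm]
  · intro l
    have h0 := hz2 l
    rw [Fintype.sum_sum_type] at h0
    simp only [Sum.elim_inl, Sum.elim_inr] at h0
    have hcc : ∀ p : Fin k × {η // η ∈ D}, c p.1 ↑p.2 * dm (Sum.inr p) l
        = ∑ i : ι, a i * bA i p.1 ↑p.2 * dm (Sum.inr p) l := fun p => by
      rw [hcdef]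
      simp only
      rw [Finset.sum_mul]
    have hsw : ∑ i : ι, ∑ p : Fin k × {η // η ∈ D},
        a i * bA i p.1 ↑p.2 * dm (Sum.inr p) l
        = ∑ p : Fin k × {η // η ∈ D}, c p.1 ↑p.2 * dm (Sum.inr p) l := by
      rw [Finset.sum_comm]
      exact Finset.sum_congr rfl (fun p _ => (hcc p).symm)
    simp only [mul_add, Finset.mul_sum, Finset.sum_add_distrib, ← mul_assoc]
    rw [hsw]
    exact h0

end KeyLemma

/-!
STATEMENT 14.  Let M be a Γ-filtered left A-module with Γ-filtration FM.
If G(M) is a flat G(A)-module, then M is a flat A-module.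
-/

theorem statement14 [DecidableEq Γ]
    [CovariantClass Γ Γ (· * ·) (· < ·)] [CovariantClass Γ Γ (swap (· * ·)) (· < ·)]
    [WellFoundedLT Γ] (hone : ∀ γ : Γ, (1 : Γ) ≤ γ)
    {A : Type w} [Ring A] [Algebra K A] (FA : AlgFiltration K Γ A)
    {B : Type x} [Ring B] [Algebra K B] (GA : AssocGraded K Γ FA B)
    (M : Type y) [AddCommGroup M] [Module K M] [Module A M] [IsScalarTower K A M]
    (FM : ModFiltration K Γ FA M)
    (N : Type z) [AddCommGroup N] [Module K N] [Module B N] [IsScalarTower K B N]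
    (GrM : AssocGradedMod K Γ GA FM N) :
    IsFlatModule B N → IsFlatModule A M := by
  intro flat n a m hrel
  classical
  choose γd hγd using fun i => FA.exhaustive (a i)
  choose δd hδd using fun i => FM.exhaustive (m i)
  obtain ⟨τ, hτ⟩ : ∃ τ : Γ, ∀ i : Fin n, a i ≠ 0 → m i ≠ 0 → γd i * δd i ≤ τ := by
    by_cases hne : (Finset.univ.filter (fun i : Fin n => a i ≠ 0 ∧ m i ≠ 0)).Nonempty
    · refine ⟨((Finset.univ.filter (fun i : Fin n => a i ≠ 0 ∧ m i ≠ 0)).image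
        (fun i => γd i * δd i)).max' (hne.image _), ?_⟩
      intro i hia him
      have hmem : i ∈ Finset.univ.filter (fun i : Fin n => a i ≠ 0 ∧ m i ≠ 0) :=
        Finset.mem_filter.mpr ⟨Finset.mem_univ _, hia, him⟩
      exact Finset.le_max'
        ((Finset.univ.filter (fun i : Fin n => a i ≠ 0 ∧ m i ≠ 0)).image
          (fun i => γd i * δd i)) _ (Finset.mem_image.mpr ⟨i, hmem, rfl⟩)
    · exact ⟨1, fun i hia him =>
        absurd ⟨i, Finset.mem_filter.mpr ⟨Finset.mem_univ _, hia, him⟩⟩ hne⟩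
  obtain ⟨k, b, y, h1, h2⟩ := key_lift GrM flat τ (ULift.{v} (Fin n))
    (fun i => a i.down) (fun i => m i.down) (fun i => γd i.down) (fun i => δd i.down)
    (fun i => hγd i.down) (fun i => hδd i.down) (fun i hia him => hτ i.down hia him)
    ((Equiv.sum_comp (Equiv.ulift) (fun i => a i • m i)).trans hrel)
  refine ⟨k, fun i j => b ⟨i⟩ j, y, fun i => h1 ⟨i⟩, fun j => ?_⟩
  exact ((Equiv.sum_comp (Equiv.ulift) (fun i => a i * b ⟨i⟩ j)).symm.trans (h2 j))
end
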